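/- arXiv:1703.02776 — 4 statements merged into one kernel-verified Lean document; each statement's English description precedes it below -/
import Mathlib

section
/- Let q, x ∈ ℂ with |q| < 1 and |q| < |x| < 1. Then the two series below converge absolutely and exp( −∑_{m≥1} x^m/(m·(1 − q^m)) + ∑_{m≥1} x^{−m}·q^m/(m·(1 − q^m)) ) = ∏_{k≥0} (1 − x·q^k) · ∏_{k≥1} (1 − x^{−1}·q^k)^{−1}, where both infinite products converge absolutely and no factor vanishes. -/
/- Expanding `1 / (1 - q^(m+1))` as a geometric series writes the `m`-th term of the first series as
`∑_k (x q^k)^(m+1) / (m+1)`. The resulting double series converges absolutely, and summing it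
the other way round gives `∑_k -log (1 - x q^k)` by the Taylor series of the logarithm.
Exponentiating turns this into the product `∏_k (1 - x q^k)`; the second series is the first one
at `x⁻¹ q` in place of `x`, which lies in the unit disk because `‖q‖ < ‖x‖`. -/

open Complex MeasureTheory Filter Topology

/-- The integral of `g` along the real axis with a semicircular detour of
radius `r` above the origin. -/
noncomputable def contourIntegral (r : ℝ) (g : ℂ → ℂ) : ℂ :=
  (∫ x : ℝ in Set.Iic (-r), g (x : ℂ)) +
  (∫ θ : ℝ in (0:ℝ)..Real.pi,
      g ((r : ℂ) * Complex.exp (Complex.I * ((Real.pi : ℂ) - (θ : ℂ)))) *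
        (-Complex.I * (r : ℂ) * Complex.exp (Complex.I * ((Real.pi : ℂ) - (θ : ℂ))))) +
  (∫ x : ℝ in Set.Ici r, g (x : ℂ))

/-- The polylogarithm `Li_k(x) = ∑_{n ≥ 1} x^n / n^k`, for `|x| < 1`. -/
noncomputable def Li (k : ℤ) (x : ℂ) : ℂ :=
  ∑' n : ℕ, x ^ (n + 1) / ((n : ℂ) + 1) ^ k

/-- A closed subsector of the open right half-plane. -/
def IsClosedSubsector (S : Set ℂ) : Prop :=
  ∃ θ₁ θ₂ : ℝ, -(Real.pi / 2) < θ₁ ∧ θ₁ ≤ θ₂ ∧ θ₂ < Real.pi / 2 ∧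
    S = {z : ℂ | ∃ ρ θ : ℝ, 0 < ρ ∧ θ₁ ≤ θ ∧ θ ≤ θ₂ ∧
          z = (ρ : ℂ) * Complex.exp (Complex.I * (θ : ℂ))}

noncomputable def qLogTerm (q x : ℂ) (m : ℕ) : ℂ :=
  x ^ (m + 1) / (((m : ℂ) + 1) * (1 - q ^ (m + 1)))

lemma one_le_norm_natCast_add_one (m : ℕ) : 1 ≤ ‖(m : ℂ) + 1‖ := by
  rw [← Nat.cast_succ, Complex.norm_natCast]
  exact_mod_cast Nat.succ_pos m

lemma one_sub_norm_le_norm_one_sub_pow {q : ℂ} (hq : ‖q‖ ≤ 1) {n : ℕ} (hn : n ≠ 0) :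
    1 - ‖q‖ ≤ ‖1 - q ^ n‖ :=
  calc 1 - ‖q‖ ≤ ‖(1 : ℂ)‖ - ‖q ^ n‖ := by
        rw [norm_one, norm_pow]
        linarith [pow_le_of_le_one (norm_nonneg q) hq hn]
    _ ≤ ‖1 - q ^ n‖ := norm_sub_norm_le _ _

section

variable {q x : ℂ}

lemma norm_mul_pow_lt_one (hx : ‖x‖ < 1) (hq : ‖q‖ ≤ 1) (k : ℕ) : ‖x * q ^ k‖ < 1 := by
  rw [norm_mul, norm_pow]
  exact (mul_le_of_le_one_right (norm_nonneg x) (pow_le_one₀ (norm_nonneg q) hq)).trans_lt hx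

lemma one_sub_mul_pow_ne_zero (hx : ‖x‖ < 1) (hq : ‖q‖ ≤ 1) (k : ℕ) : 1 - x * q ^ k ≠ 0 := by
  rw [sub_ne_zero]
  intro h
  simpa [← h] using norm_mul_pow_lt_one hx hq k

lemma summable_norm_mul_pow (hq : ‖q‖ < 1) : Summable fun k : ℕ => ‖x * q ^ k‖ := by
  simpa only [norm_mul, norm_pow] using
    (summable_geometric_of_lt_one (norm_nonneg q) hq).mul_left ‖x‖

lemma summable_norm_qLogTerm (hx : ‖x‖ < 1) (hq : ‖q‖ < 1) :
    Summable fun m : ℕ => ‖qLogTerm q x m‖ := by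
  have hgeom : Summable fun m : ℕ => ‖x‖ ^ (m + 1) / (1 - ‖q‖) :=
    ((summable_nat_add_iff 1).2 (summable_geometric_of_lt_one (norm_nonneg x) hx)).div_const _
  refine hgeom.of_nonneg_of_le (fun m => norm_nonneg _) fun m => ?_
  rw [qLogTerm, norm_div, norm_mul, norm_pow]
  gcongr
  exact (one_sub_norm_le_norm_one_sub_pow hq.le m.succ_ne_zero).trans
    (le_mul_of_one_le_left (norm_nonneg _) (one_le_norm_natCast_add_one m))

lemma hasSum_qLogTerm (hq : ‖q‖ < 1) (m : ℕ) :
    HasSum (fun k : ℕ => (x * q ^ k) ^ (m + 1) / ((m : ℂ) + 1)) (qLogTerm q x m) := by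
  have hqm : ‖q ^ (m + 1)‖ < 1 := by
    rw [norm_pow]
    exact pow_lt_one₀ (norm_nonneg q) hq m.succ_ne_zero
  have hterm (k : ℕ) : (x * q ^ k) ^ (m + 1) / ((m : ℂ) + 1)
      = x ^ (m + 1) / ((m : ℂ) + 1) * (q ^ (m + 1)) ^ k := by
    rw [mul_pow, ← pow_mul, ← pow_mul, Nat.mul_comm]
    ring
  simp only [hterm]
  rw [qLogTerm, ← div_div, div_eq_mul_inv _ (1 - q ^ (m + 1))]
  exact (hasSum_geometric_of_norm_lt_one hqm).mul_left _

lemma summable_pow_mul_pow_succ_div (hx : ‖x‖ < 1) (hq : ‖q‖ < 1) :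
    Summable (Function.uncurry fun (m k : ℕ) => (x * q ^ k) ^ (m + 1) / ((m : ℂ) + 1)) := by
  refine Summable.of_norm ?_
  have hprod : Summable fun p : ℕ × ℕ => ‖x‖ ^ p.1 * ‖q‖ ^ p.2 :=
    (summable_geometric_of_lt_one (norm_nonneg x) hx).mul_of_nonneg
      (summable_geometric_of_lt_one (norm_nonneg q) hq)
      (fun m => pow_nonneg (norm_nonneg x) m) (fun k => pow_nonneg (norm_nonneg q) k)
  refine hprod.of_nonneg_of_le (fun p => norm_nonneg _) fun ⟨m, k⟩ => ?_
  calc ‖(x * q ^ k) ^ (m + 1) / ((m : ℂ) + 1)‖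
      = ‖x‖ ^ (m + 1) * (‖q‖ ^ k) ^ (m + 1) / ‖(m : ℂ) + 1‖ := by
        rw [norm_div, norm_pow, norm_mul, norm_pow, mul_pow]
    _ ≤ ‖x‖ ^ (m + 1) * (‖q‖ ^ k) ^ (m + 1) :=
        div_le_self (by positivity) (one_le_norm_natCast_add_one m)
    _ ≤ ‖x‖ ^ m * ‖q‖ ^ k :=
        mul_le_mul (pow_le_pow_of_le_one (norm_nonneg x) hx.le m.le_succ)
          (pow_le_of_le_one (by positivity) (pow_le_one₀ (norm_nonneg q) hq.le) m.succ_ne_zero)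
          (by positivity) (by positivity)

lemma hasSum_log_one_sub_mul_pow (hx : ‖x‖ < 1) (hq : ‖q‖ < 1) :
    HasSum (fun k : ℕ => Complex.log (1 - x * q ^ k)) (-∑' m, qLogTerm q x m) := by
  have hF := summable_pow_mul_pow_succ_div hx hq
  have hcol (k : ℕ) := Complex.hasSum_taylorSeries_neg_log' (norm_mul_pow_lt_one hx hq.le k)
  have hsum : ∑' m, qLogTerm q x m = -∑' k, Complex.log (1 - x * q ^ k) := by
    rw [← tsum_neg, ← tsum_congr fun k => (hcol k).tsum_eq, hF.tsum_comm]
    exact tsum_congr fun m => ((hasSum_qLogTerm hq m).tsum_eq).symm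
  have hlog : Summable fun k : ℕ => Complex.log (1 - x * q ^ k) := by
    simpa [(hcol _).tsum_eq] using hF.prod_symm.prod.neg
  rw [hsum, neg_neg]
  exact hlog.hasSum

lemma hasProd_one_sub_mul_pow (hx : ‖x‖ < 1) (hq : ‖q‖ < 1) :
    HasProd (fun k : ℕ => 1 - x * q ^ k) (Complex.exp (-∑' m, qLogTerm q x m)) :=
  Complex.hasProd_of_hasSum_log (one_sub_mul_pow_ne_zero hx hq.le)
    (hasSum_log_one_sub_mul_pow hx hq)

end

/-- The series–product identity arising from the residue computation in the proof of
the reflection relation for the Barnes double sine function. -/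
theorem series_product_identity_doubleSine
    (q x : ℂ) (hq : ‖q‖ < 1) (hqx : ‖q‖ < ‖x‖)
    (hx : ‖x‖ < 1) :
    Summable (fun m : ℕ =>
      ‖x ^ (m + 1) / (((m : ℂ) + 1) * (1 - q ^ (m + 1)))‖) ∧
    Summable (fun m : ℕ =>
      ‖x⁻¹ ^ (m + 1) * q ^ (m + 1) / (((m : ℂ) + 1) * (1 - q ^ (m + 1)))‖) ∧
    Summable (fun k : ℕ => ‖x * q ^ k‖) ∧
    Summable (fun k : ℕ => ‖x⁻¹ * q ^ (k + 1)‖) ∧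
    Multipliable (fun k : ℕ => 1 - x * q ^ k) ∧
    Multipliable (fun k : ℕ => 1 - x⁻¹ * q ^ (k + 1)) ∧
    (∀ k : ℕ, 1 - x * q ^ k ≠ 0) ∧
    (∀ k : ℕ, 1 - x⁻¹ * q ^ (k + 1) ≠ 0) ∧
    Complex.exp (-(∑' m : ℕ, x ^ (m + 1) / (((m : ℂ) + 1) * (1 - q ^ (m + 1))))
        + ∑' m : ℕ, x⁻¹ ^ (m + 1) * q ^ (m + 1) / (((m : ℂ) + 1) * (1 - q ^ (m + 1)))) =
      (∏' k : ℕ, (1 - x * q ^ k)) * (∏' k : ℕ, (1 - x⁻¹ * q ^ (k + 1)))⁻¹ := by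
  have hy : ‖x⁻¹ * q‖ < 1 := by
    rw [norm_mul, norm_inv, inv_mul_lt_one₀ ((norm_nonneg q).trans_lt hqx)]
    exact hqx
  have hshift (k : ℕ) : x⁻¹ * q ^ (k + 1) = x⁻¹ * q * q ^ k := by ring
  have hterm₁ (m : ℕ) : x ^ (m + 1) / (((m : ℂ) + 1) * (1 - q ^ (m + 1))) = qLogTerm q x m :=
    rfl
  have hterm₂ (m : ℕ) : x⁻¹ ^ (m + 1) * q ^ (m + 1) / (((m : ℂ) + 1) * (1 - q ^ (m + 1)))
      = qLogTerm q (x⁻¹ * q) m := by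
    rw [qLogTerm, mul_pow]
  have hP₁ := hasProd_one_sub_mul_pow hx hq
  have hP₂ := hasProd_one_sub_mul_pow hy hq
  simp only [hterm₁, hterm₂, hshift]
  refine ⟨summable_norm_qLogTerm hx hq, summable_norm_qLogTerm hy hq, summable_norm_mul_pow hq,
    summable_norm_mul_pow hq, hP₁.multipliable, hP₂.multipliable,
    one_sub_mul_pow_ne_zero hx hq.le, one_sub_mul_pow_ne_zero hy hq.le, ?_⟩
  rw [hP₁.tprod_eq, hP₂.tprod_eq, ← Complex.exp_neg, neg_neg, ← Complex.exp_add]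
end

section
/- Let q, x ∈ ℂ with |q| < 1, |x·q| < 1 and |x^{−1}·q| < 1. Then the two series below converge absolutely and exp( −∑_{m≥1} x^m·q^m/(m·(1 − q^m)²) − ∑_{m≥1} x^{−m}·q^m/(m·(1 − q^m)²) ) = ∏_{k≥1} (1 − x·q^k)^{k} · ∏_{k≥1} (1 − x^{−1}·q^k)^{k}, where both infinite products converge absolutely. -/
open Complex MeasureTheory Filter Topology

/-! For `‖z‖ < 1`, `(1 - z) ^ (k + 1) = exp (-(k + 1) ∑_{m ≥ 0} z ^ (m + 1) / (m + 1))`. Taking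
`z = y q ^ (k + 1)` gives a double series in `(k, m)` which converges absolutely, being dominated by
`(k + 1) ‖q‖ ^ k ‖y q‖ ^ m`. Summing it over `k` first instead, with
`∑_{k ≥ 0} (k + 1) w ^ (k + 1) = w / (1 - w) ^ 2` at `w = q ^ (m + 1)`, produces the series
`∑_m y ^ (m + 1) q ^ (m + 1) / ((m + 1) (1 - q ^ (m + 1)) ^ 2)`. The theorem is this for `y = x` and
`y = x⁻¹`. -/

lemma summable_norm_of_hasSum_fiberwise {β γ E : Type*} [NormedAddCommGroup E]
    {f : β × γ → E} {g : β → E} (hf : Summable fun p ↦ ‖f p‖)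
    (hg : ∀ b, HasSum (fun c ↦ f (b, c)) (g b)) :
    Summable fun b ↦ ‖g b‖ :=
  hf.prod.of_nonneg_of_le (fun _ ↦ norm_nonneg _) fun b ↦
    (hg b).tsum_eq ▸ norm_tsum_le_tsum_norm (hf.prod_factor b)

lemma hasSum_coe_add_one_mul_pow_succ {𝕜 : Type*} [NormedDivisionRing 𝕜]
    [HasSummableGeomSeries 𝕜] {r : 𝕜} (hr : ‖r‖ < 1) :
    HasSum (fun n : ℕ ↦ ((n : 𝕜) + 1) * r ^ (n + 1)) (r / (1 - r) ^ 2) := by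
  rw_mod_cast [hasSum_nat_add_iff 1 (f := fun n : ℕ ↦ (n : 𝕜) * r ^ n)]
  simpa using hasSum_coe_mul_geometric_of_norm_lt_one hr

namespace Complex

lemma summable_norm_cexp_sub_one {ι : Type*} {f : ι → ℂ} (hf : Summable fun i ↦ ‖f i‖) :
    Summable fun i ↦ ‖cexp (f i) - 1‖ := by
  refine (hf.mul_left 2).of_norm_bounded_eventually ?_
  filter_upwards [hf.tendsto_cofinite_zero.eventually_le_const one_pos] with i hi
  simpa using norm_exp_sub_one_le hi

end Complex

noncomputable def residueSeriesTerm (y q : ℂ) (m : ℕ) : ℂ :=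
  y ^ (m + 1) * q ^ (m + 1) / (((m : ℂ) + 1) * (1 - q ^ (m + 1)) ^ 2)

/-- Summing over `m` gives `-(k + 1) * log (1 - y * q ^ (k + 1))`, summing over `k` gives
`residueSeriesTerm y q m`. -/
noncomputable def doubleSeriesTerm (y q : ℂ) (p : ℕ × ℕ) : ℂ :=
  ((p.1 : ℂ) + 1) * (y * q ^ (p.1 + 1)) ^ (p.2 + 1) / ((p.2 : ℂ) + 1)

lemma norm_mul_pow_succ (y q : ℂ) (k : ℕ) : ‖y * q ^ (k + 1)‖ = ‖y * q‖ * ‖q‖ ^ k := by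
  rw [show y * q ^ (k + 1) = y * q * q ^ k by ring, norm_mul, norm_pow]

section DoubleSeries

variable {y q : ℂ}

lemma norm_mul_pow_succ_le (hq : ‖q‖ ≤ 1) (k : ℕ) : ‖y * q ^ (k + 1)‖ ≤ ‖y * q‖ := by
  rw [norm_mul_pow_succ]
  exact mul_le_of_le_one_right (norm_nonneg _) (pow_le_one₀ (norm_nonneg _) hq)

lemma one_sub_mul_pow_succ_ne_zero (hq : ‖q‖ ≤ 1) (hyq : ‖y * q‖ < 1) (k : ℕ) :
    1 - y * q ^ (k + 1) ≠ 0 := by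
  refine sub_ne_zero.2 fun h ↦ ?_
  simpa [← h] using (norm_mul_pow_succ_le hq k).trans_lt hyq

lemma norm_doubleSeriesTerm_le (hq : ‖q‖ ≤ 1) (hyq : ‖y * q‖ ≤ 1) (k m : ℕ) :
    ‖doubleSeriesTerm y q (k, m)‖ ≤ ((k + 1) * ‖q‖ ^ k) * ‖y * q‖ ^ m := by
  set z := y * q ^ (k + 1)
  have hz₁ : ‖z‖ ≤ ‖y * q‖ := norm_mul_pow_succ_le hq k
  have hz₂ : ‖z‖ ≤ ‖q‖ ^ k := norm_mul_pow_succ y q k ▸ mul_le_of_le_one_left (by positivity) hyq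
  calc ‖doubleSeriesTerm y q (k, m)‖ = (k + 1) * (‖z‖ ^ m * ‖z‖) / (m + 1) := by
        rw [doubleSeriesTerm, norm_div, norm_mul, norm_pow, pow_succ]
        norm_cast
    _ ≤ (k + 1) * (‖z‖ ^ m * ‖z‖) := div_le_self (by positivity) (by simp)
    _ ≤ (k + 1) * (‖y * q‖ ^ m * ‖q‖ ^ k) := by gcongr
    _ = _ := by ring

lemma summable_norm_doubleSeriesTerm (hq : ‖q‖ < 1) (hyq : ‖y * q‖ < 1) :
    Summable fun p ↦ ‖doubleSeriesTerm y q p‖ := by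
  have hnq : ‖‖q‖‖ < 1 := by rwa [norm_norm]
  have hk : Summable fun k : ℕ ↦ ((k : ℝ) + 1) * ‖q‖ ^ k := by
    simpa [add_mul] using (summable_pow_mul_geometric_of_norm_lt_one 1 hnq).add
      (summable_geometric_of_lt_one (norm_nonneg _) hq)
  refine (hk.mul_of_nonneg (summable_geometric_of_lt_one (norm_nonneg _) hyq)
    (fun _ ↦ by positivity) fun _ ↦ by positivity).of_nonneg_of_le (fun _ ↦ norm_nonneg _)
    fun p ↦ norm_doubleSeriesTerm_le hq.le hyq.le p.1 p.2

lemma hasSum_doubleSeriesTerm_fst (hq : ‖q‖ ≤ 1) (hyq : ‖y * q‖ < 1) (k : ℕ) :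
    HasSum (fun m ↦ doubleSeriesTerm y q (k, m))
      (-(((k : ℂ) + 1) * log (1 - y * q ^ (k + 1)))) := by
  simpa [doubleSeriesTerm, mul_div_assoc] using
    (hasSum_taylorSeries_neg_log' ((norm_mul_pow_succ_le hq k).trans_lt hyq)).mul_left ((k : ℂ) + 1)

lemma hasSum_doubleSeriesTerm_snd (hq : ‖q‖ < 1) (m : ℕ) :
    HasSum (fun k ↦ doubleSeriesTerm y q (k, m)) (residueSeriesTerm y q m) := by
  have hw : ‖q ^ (m + 1)‖ < 1 := by
    rw [norm_pow]
    exact pow_lt_one₀ (norm_nonneg _) hq (by omega)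
  have h := (hasSum_coe_add_one_mul_pow_succ hw).mul_left (y ^ (m + 1) / ((m : ℂ) + 1))
  rw [div_mul_div_comm] at h
  refine h.congr_fun fun k ↦ ?_
  simp only [doubleSeriesTerm, mul_pow, ← pow_mul]
  ring

lemma hasSum_succ_mul_log_one_sub (hq : ‖q‖ < 1) (hyq : ‖y * q‖ < 1) :
    HasSum (fun k : ℕ ↦ ((k : ℂ) + 1) * log (1 - y * q ^ (k + 1)))
      (-∑' m, residueSeriesTerm y q m) := by
  have hF := (summable_norm_doubleSeriesTerm hq hyq).of_norm.hasSum
  have hrows := hF.prod_fiberwise (hasSum_doubleSeriesTerm_fst hq.le hyq)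
  have hcols : HasSum (residueSeriesTerm y q) (∑' p, doubleSeriesTerm y q p) :=
    ((Equiv.prodComm ℕ ℕ).hasSum_iff.2 hF).prod_fiberwise (hasSum_doubleSeriesTerm_snd hq)
  simpa [hcols.tsum_eq] using hrows.neg

lemma summable_norm_residueSeriesTerm (hq : ‖q‖ < 1) (hyq : ‖y * q‖ < 1) :
    Summable fun m ↦ ‖residueSeriesTerm y q m‖ :=
  summable_norm_of_hasSum_fiberwise (summable_norm_doubleSeriesTerm hq hyq).prod_symm
    (hasSum_doubleSeriesTerm_snd hq)

lemma summable_norm_succ_mul_log_one_sub (hq : ‖q‖ < 1) (hyq : ‖y * q‖ < 1) :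
    Summable fun k : ℕ ↦ ‖((k : ℂ) + 1) * log (1 - y * q ^ (k + 1))‖ := by
  simpa using summable_norm_of_hasSum_fiberwise (summable_norm_doubleSeriesTerm hq hyq)
    (hasSum_doubleSeriesTerm_fst hq.le hyq)

lemma one_sub_mul_pow_succ_pow_succ (hq : ‖q‖ ≤ 1) (hyq : ‖y * q‖ < 1) (k : ℕ) :
    (1 - y * q ^ (k + 1)) ^ (k + 1) = cexp (((k : ℂ) + 1) * log (1 - y * q ^ (k + 1))) := by
  rw_mod_cast [exp_nat_mul, exp_log (one_sub_mul_pow_succ_ne_zero hq hyq k)]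

lemma hasProd_one_sub_mul_pow_succ_pow_succ (hq : ‖q‖ < 1) (hyq : ‖y * q‖ < 1) :
    HasProd (fun k : ℕ ↦ (1 - y * q ^ (k + 1)) ^ (k + 1))
      (cexp (-∑' m, residueSeriesTerm y q m)) :=
  (hasSum_succ_mul_log_one_sub hq hyq).cexp.congr_fun (one_sub_mul_pow_succ_pow_succ hq.le hyq)

lemma summable_norm_one_sub_mul_pow_succ_pow_succ_sub_one (hq : ‖q‖ < 1) (hyq : ‖y * q‖ < 1) :
    Summable fun k : ℕ ↦ ‖(1 - y * q ^ (k + 1)) ^ (k + 1) - 1‖ := by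
  simpa only [one_sub_mul_pow_succ_pow_succ hq.le hyq] using
    Complex.summable_norm_cexp_sub_one (summable_norm_succ_mul_log_one_sub hq hyq)

end DoubleSeries

/-- The series–product identity arising from the residue computation in the proof of
the reflection relation for the triple-sine based function `G`. -/
theorem series_product_identity_tripleSine
    (q x : ℂ) (hq : ‖q‖ < 1) (hxq : ‖x * q‖ < 1)
    (hxq' : ‖x⁻¹ * q‖ < 1) :
    Summable (fun m : ℕ =>
      ‖x ^ (m + 1) * q ^ (m + 1) / (((m : ℂ) + 1) * (1 - q ^ (m + 1)) ^ 2)‖) ∧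
    Summable (fun m : ℕ =>
      ‖x⁻¹ ^ (m + 1) * q ^ (m + 1) / (((m : ℂ) + 1) * (1 - q ^ (m + 1)) ^ 2)‖) ∧
    Summable (fun k : ℕ => ‖(1 - x * q ^ (k + 1)) ^ (k + 1) - 1‖) ∧
    Summable (fun k : ℕ => ‖(1 - x⁻¹ * q ^ (k + 1)) ^ (k + 1) - 1‖) ∧
    Multipliable (fun k : ℕ => (1 - x * q ^ (k + 1)) ^ (k + 1)) ∧
    Multipliable (fun k : ℕ => (1 - x⁻¹ * q ^ (k + 1)) ^ (k + 1)) ∧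
    Complex.exp (-(∑' m : ℕ, x ^ (m + 1) * q ^ (m + 1) / (((m : ℂ) + 1) * (1 - q ^ (m + 1)) ^ 2))
        - ∑' m : ℕ, x⁻¹ ^ (m + 1) * q ^ (m + 1) / (((m : ℂ) + 1) * (1 - q ^ (m + 1)) ^ 2)) =
      (∏' k : ℕ, (1 - x * q ^ (k + 1)) ^ (k + 1)) *
      (∏' k : ℕ, (1 - x⁻¹ * q ^ (k + 1)) ^ (k + 1)) := by
  have hprod := hasProd_one_sub_mul_pow_succ_pow_succ hq hxq
  have hprod' := hasProd_one_sub_mul_pow_succ_pow_succ hq hxq'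
  refine ⟨summable_norm_residueSeriesTerm hq hxq, summable_norm_residueSeriesTerm hq hxq',
    summable_norm_one_sub_mul_pow_succ_pow_succ_sub_one hq hxq,
    summable_norm_one_sub_mul_pow_succ_pow_succ_sub_one hq hxq',
    hprod.multipliable, hprod'.multipliable, ?_⟩
  rw [hprod.tprod_eq, hprod'.tprod_eq, ← exp_add, sub_eq_add_neg]
  rfl
end

section
/- Let ω1, ω2, z ∈ ℂ with Re ω1 > 0, Re ω2 > 0 and 0 < Re z < Re(ω1 + ω2). Then: (a) the function u ↦ ∫_C e^{zs}/((e^{ω1 s} − 1)(e^{u s} − 1)·s) ds, defined for u in a neighbourhood of ω2 in the open right half-plane, is complex differentiable at u = ω2; (b) the function ζ ↦ −∫_C e^{(ζ+ω2)s}/((e^{ω2 s} − 1)²(e^{ω1 s} − 1)·s) ds, defined for ζ in a neighbourhood of z, is complex differentiable at ζ = z; and (c) the two derivatives are equal, both being given by −∫_C e^{(z+ω2)s}/((e^{ω1 s} − 1)(e^{ω2 s} − 1)²) ds. (This is the relation ∂/∂ω2 log F(z|ω1,ω2) = ∂/∂z log G(z|ω2,ω1) at the level of the integral representations.) -/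
open Complex MeasureTheory Filter Topology

/-! Both sides are parametric integrals over the detour contour, differentiated under the
integral sign. Only the integrand itself has to be dominated: on a disc of parameters, Cauchy's
estimate turns a bound on it into a bound on its derivative on the half-disc. On the semicircle
the integrand is jointly continuous in the parameter and `s`, hence bounded, because
`‖ω‖ r < 2π` keeps the poles `2πik/ω` off the circle. On the real tails
`‖e^{ωx} - 1‖ ≥ (1 - e^{-ar}) e^{a max(x,0)}` for `0 ≤ a ≤ Re ω`, so
`e^{cx} / (∏ (e^{ωᵢx} - 1) · x)` decays like `e^{-δ|x|}` once `0 < Re c < ∑ Re ωᵢ`. The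
hypothesis `0 < Re z < Re (ω₁ + ω₂)` provides this for `c = z` with periods `ω₁, u` (`u` near
`ω₂`) and for `c = w + ω₂` with periods `ω₂, ω₂, ω₁` (`w` near `z`). -/

open Metric Set

theorem norm_deriv_le_of_norm_le_on_ball {f : ℂ → ℂ} {c u : ℂ} {ε B : ℝ}
    (hf : DifferentiableOn ℂ f (ball c ε)) (hB : ∀ v ∈ ball c ε, ‖f v‖ ≤ B)
    (hu : u ∈ ball c (ε / 2)) : ‖deriv f u‖ ≤ B / (ε / 2) := by
  have hsub : closedBall u (ε / 2) ⊆ ball c ε :=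
    closedBall_subset_ball' (by rw [mem_ball] at hu; linarith)
  exact norm_deriv_le_of_forall_mem_sphere_norm_le (pos_of_mem_ball hu)
    (hf.diffContOnCl_ball hsub) fun v hv => hB v (hsub (sphere_subset_closedBall hv))

theorem hasDerivAt_integral_of_dominated_loc_of_norm_le {α : Type*} [MeasurableSpace α]
    {μ : Measure α} {G G' : ℂ → α → ℂ} {u₀ : ℂ} {ε : ℝ} {b : α → ℝ} (hε : 0 < ε)
    (hmeas : ∀ u ∈ ball u₀ ε, AEStronglyMeasurable (G u) μ)
    (hmeas' : AEStronglyMeasurable (G' u₀) μ)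
    (hderiv : ∀ᵐ x ∂μ, ∀ u ∈ ball u₀ ε, HasDerivAt (G · x) (G' u x) u)
    (hbound : ∀ᵐ x ∂μ, ∀ u ∈ ball u₀ ε, ‖G u x‖ ≤ b x) (hb : Integrable b μ) :
    HasDerivAt (fun u => ∫ x, G u x ∂μ) (∫ x, G' u₀ x ∂μ) u₀ := by
  have hu₀ : u₀ ∈ ball u₀ ε := mem_ball_self hε
  have hhalf : ball u₀ (ε / 2) ⊆ ball u₀ ε := ball_subset_ball (by linarith)
  refine (hasDerivAt_integral_of_dominated_loc_of_deriv_le (ball_mem_nhds u₀ (half_pos hε))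
    (eventually_of_mem (ball_mem_nhds u₀ hε) hmeas)
    (hb.mono' (hmeas u₀ hu₀) (hbound.mono fun x hx => hx u₀ hu₀)) hmeas' ?_
    (hb.div_const (ε / 2)) ?_).2
  · filter_upwards [hderiv, hbound] with x hd hB u hu
    rw [← (hd u (hhalf hu)).deriv]
    exact norm_deriv_le_of_norm_le_on_ball
      (fun v hv => (hd v hv).differentiableAt.differentiableWithinAt) hB hu
  · filter_upwards [hderiv] with x hd u hu using hd u (hhalf hu)

theorem integrable_exp_neg_mul_abs {δ : ℝ} (hδ : 0 < δ) :
    Integrable fun x : ℝ => Real.exp (-δ * |x|) := by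
  rw [← integrableOn_univ, ← Iic_union_Ioi (a := 0), integrableOn_union]
  constructor
  · refine (integrableOn_exp_mul_Iic hδ 0).congr_fun (fun x hx => ?_) measurableSet_Iic
    rw [abs_of_nonpos hx]; ring_nf
  · refine (integrableOn_exp_mul_Ioi (neg_lt_zero.2 hδ) 0).congr_fun (fun x hx => ?_)
      measurableSet_Ioi
    rw [abs_of_pos hx]

def detourContour (r : ℝ) : Set ℂ := sphere 0 r ∪ ((↑) : ℝ → ℂ) '' {x | r ≤ |x|}

theorem contourIntegral_neg (r : ℝ) (g : ℂ → ℂ) :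
    contourIntegral r (fun s => -g s) = -contourIntegral r g := by
  simp only [contourIntegral, neg_mul, integral_neg, intervalIntegral.integral_neg, neg_add]

theorem hasDerivAt_contourIntegral {F F' : ℂ → ℂ → ℂ} {u₀ : ℂ} {r ε C δ : ℝ}
    (hr : 0 ≤ r) (hε : 0 < ε) (hδ : 0 < δ)
    (hmeas : ∀ u ∈ ball u₀ ε, Measurable (F u)) (hmeas' : Measurable (F' u₀))
    (hderiv : ∀ s ∈ detourContour r, ∀ u ∈ ball u₀ ε, HasDerivAt (F · s) (F' u s) u)
    (htail : ∀ u ∈ ball u₀ ε, ∀ x : ℝ, r ≤ |x| → ‖F u x‖ ≤ C * Real.exp (-δ * |x|))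
    (harc : ContinuousOn (Function.uncurry F) (closedBall u₀ ε ×ˢ sphere 0 r)) :
    HasDerivAt (fun u => contourIntegral r (F u)) (contourIntegral r (F' u₀)) u₀ := by
  have tail (S : Set ℝ) (hS : S ⊆ {x | r ≤ |x|}) (hSm : MeasurableSet S) :
      HasDerivAt (fun u => ∫ x in S, F u x) (∫ x in S, F' u₀ x) u₀ :=
    hasDerivAt_integral_of_dominated_loc_of_norm_le hε
      (fun u hu => ((hmeas u hu).comp measurable_ofReal).aestronglyMeasurable)
      (hmeas'.comp measurable_ofReal).aestronglyMeasurable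
      ((ae_restrict_iff' hSm).2 (Eventually.of_forall fun x hx u hu =>
        hderiv _ (Or.inr ⟨x, hS hx, rfl⟩) u hu))
      ((ae_restrict_iff' hSm).2 (Eventually.of_forall fun x hx u hu => htail u hu x (hS hx)))
      ((integrable_exp_neg_mul_abs hδ).const_mul C).integrableOn
  have hIic : Iic (-r) ⊆ {x | r ≤ |x|} := fun x hx => (le_neg.1 hx).trans (neg_le_abs x)
  have hIci : Ici r ⊆ {x | r ≤ |x|} := fun x hx => le_trans hx (le_abs_self x)
  set e : ℝ → ℂ := fun θ => exp (I * ((Real.pi : ℂ) - θ))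
  have hnorm_e : ∀ θ, ‖e θ‖ = 1 := fun θ => by simp [e, norm_exp]
  have hγ : Measurable fun θ : ℝ => (r : ℂ) * e θ := by fun_prop
  have hγ' : Measurable fun θ : ℝ => -I * r * e θ := by fun_prop
  have hsphere : ∀ θ, (r : ℂ) * e θ ∈ sphere (0 : ℂ) r := fun θ => by
    simp [hnorm_e, abs_of_nonneg hr]
  obtain ⟨M, hM⟩ :=
    ((isCompact_closedBall u₀ ε).prod (isCompact_sphere 0 r)).exists_bound_of_continuousOn harc
  have arc : HasDerivAt (fun u => ∫ θ in (0)..Real.pi, F u (r * e θ) * (-I * r * e θ))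
      (∫ θ in (0)..Real.pi, F' u₀ (r * e θ) * (-I * r * e θ)) u₀ := by
    simp only [intervalIntegral.integral_of_le Real.pi_pos.le]
    refine hasDerivAt_integral_of_dominated_loc_of_norm_le (b := fun _ => M * r) hε
      (fun u hu => ((hmeas u hu).comp hγ).mul hγ' |>.aestronglyMeasurable)
      ((hmeas'.comp hγ).mul hγ' |>.aestronglyMeasurable)
      (Eventually.of_forall fun θ u hu => (hderiv _ (Or.inl (hsphere θ)) u hu).mul_const _)
      (Eventually.of_forall fun θ u hu => ?_) (integrable_const _)
    show ‖F u (r * e θ) * (-I * r * e θ)‖ ≤ M * r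
    rw [norm_mul, norm_mul, norm_mul, norm_neg, norm_I, hnorm_e, norm_real, Real.norm_eq_abs,
      abs_of_nonneg hr, one_mul, mul_one]
    exact mul_le_mul_of_nonneg_right (hM (u, _) ⟨ball_subset_closedBall hu, hsphere θ⟩) hr
  exact ((tail _ hIic measurableSet_Iic).add arc).add (tail _ hIci measurableSet_Ici)

theorem exp_ne_one_of_norm_lt {w : ℂ} (hw₀ : w ≠ 0) (hw : ‖w‖ < 2 * Real.pi) :
    exp w ≠ 1 := by
  rw [Ne, exp_eq_one_iff]
  rintro ⟨n, rfl⟩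
  have hn : n ≠ 0 := by rintro rfl; simp at hw₀
  have : (1 : ℝ) ≤ |(n : ℝ)| := by exact_mod_cast Int.one_le_abs hn
  rw [norm_mul, norm_intCast, norm_mul, norm_mul, norm_I, norm_real, Real.norm_eq_abs,
    abs_of_pos Real.pi_pos] at hw
  norm_num at hw
  nlinarith [Real.pi_pos]

theorem ne_zero_of_mem_detourContour {r : ℝ} {s : ℂ} (hr : 0 < r) (hs : s ∈ detourContour r) :
    s ≠ 0 := by
  rcases hs with hs | ⟨x, hx, rfl⟩
  · rintro rfl
    simp [hr.ne] at hs
  · exact ofReal_ne_zero.2 (abs_pos.1 (hr.trans_le hx))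

theorem exp_mul_ne_one_of_mem_detourContour {ω s : ℂ} {r : ℝ} (hr : 0 < r) (hω : 0 < ω.re)
    (hωr : ‖ω‖ * r < 2 * Real.pi) (hs : s ∈ detourContour r) : exp (ω * s) ≠ 1 := by
  have hs₀ := ne_zero_of_mem_detourContour hr hs
  rcases hs with hs | ⟨x, -, rfl⟩
  · refine exp_ne_one_of_norm_lt (mul_ne_zero (fun h => by simp [h] at hω) hs₀) ?_
    rwa [norm_mul, mem_sphere_zero_iff_norm.1 hs]
  · intro h
    have := congrArg norm h
    rw [norm_exp, norm_one, Real.exp_eq_one_iff, re_mul_ofReal] at this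
    exact mul_ne_zero hω.ne' (ofReal_ne_zero.1 hs₀) this

theorem one_sub_exp_neg_mul_pos {a r : ℝ} (ha : 0 < a) (hr : 0 < r) :
    0 < 1 - Real.exp (-(a * r)) :=
  sub_pos.2 (Real.exp_lt_one_iff.2 (neg_lt_zero.2 (mul_pos ha hr)))

theorem one_sub_exp_mul_le_norm_exp_sub_one {ω : ℂ} {a r x : ℝ} (ha : 0 ≤ a)
    (hω : a ≤ ω.re) (hx : r ≤ |x|) :
    (1 - Real.exp (-(a * r))) * Real.exp (a * max x 0) ≤ ‖exp (ω * x) - 1‖ := by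
  have hnorm : ‖exp (ω * x)‖ = Real.exp (ω.re * x) := by rw [norm_exp, re_mul_ofReal]
  rcases le_or_gt 0 x with h0 | h0
  · rw [max_eq_left h0]
    rw [abs_of_nonneg h0] at hx
    have h1 : Real.exp (a * x) ≤ Real.exp (ω.re * x) :=
      Real.exp_le_exp.2 (mul_le_mul_of_nonneg_right hω h0)
    have h2 : 1 ≤ Real.exp (-(a * r)) * Real.exp (a * x) := by
      rw [← Real.exp_add]
      exact Real.one_le_exp (by nlinarith [mul_le_mul_of_nonneg_left hx ha])
    calc _ = Real.exp (a * x) - Real.exp (-(a * r)) * Real.exp (a * x) := by ring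
      _ ≤ ‖exp (ω * x)‖ - ‖(1 : ℂ)‖ := by rw [hnorm, norm_one]; linarith
      _ ≤ _ := norm_sub_norm_le _ _
  · rw [max_eq_right h0.le, mul_zero, Real.exp_zero, mul_one]
    rw [abs_of_neg h0] at hx
    calc 1 - Real.exp (-(a * r)) ≤ ‖(1 : ℂ)‖ - ‖exp (ω * x)‖ := by
          rw [hnorm, norm_one]; gcongr
          nlinarith [mul_le_mul_of_nonneg_left hx ha]
      _ ≤ ‖1 - exp (ω * x)‖ := norm_sub_norm_le _ _
      _ = _ := norm_sub_rev _ _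

theorem mul_sub_mul_max_zero_le {a b δ x : ℝ} (hδ : δ ≤ b) (hb : b + δ ≤ a) :
    b * x - a * max x 0 ≤ -δ * |x| := by
  rcases le_or_gt 0 x with h | h
  · rw [max_eq_left h, abs_of_nonneg h]; nlinarith
  · rw [max_eq_right h.le, abs_of_neg h]; nlinarith

theorem norm_exp_mul_div_le {c P : ℂ} {K a r δ x : ℝ} (hK : 0 < K) (hr : 0 < r)
    (hx : r ≤ |x|) (hP : K * Real.exp (a * max x 0) ≤ ‖P‖) (hδ : δ ≤ c.re) (hc : c.re + δ ≤ a) :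
    ‖exp (c * x) / (P * x)‖ ≤ (K * r)⁻¹ * Real.exp (-δ * |x|) := by
  rw [norm_div, norm_mul, norm_exp, re_mul_ofReal, norm_real, Real.norm_eq_abs]
  calc Real.exp (c.re * x) / (‖P‖ * |x|)
      ≤ Real.exp (c.re * x) / (K * Real.exp (a * max x 0) * r) := by gcongr
    _ = (K * r)⁻¹ * Real.exp (c.re * x - a * max x 0) := by
      rw [Real.exp_sub]; field_simp
    _ ≤ _ := by gcongr; exact mul_sub_mul_max_zero_le hδ hc

theorem hasDerivAt_exp_div_mul_exp_sub_one {c A s u : ℂ} (hA : A ≠ 0) (hs : s ≠ 0)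
    (hu : exp (u * s) ≠ 1) :
    HasDerivAt (fun u => exp (c * s) / (A * (exp (u * s) - 1) * s))
      (-(exp ((c + u) * s) / (A * (exp (u * s) - 1) ^ 2))) u := by
  have hden :
      HasDerivAt (fun u => A * (exp (u * s) - 1) * s) (A * (exp (u * s) * s) * s) u := by
    have := ((hasDerivAt_id u).mul_const s).cexp
    simp only [id, one_mul] at this
    exact ((this.sub_const 1).const_mul A).mul_const s
  refine ((hasDerivAt_const u (exp (c * s))).div hden
    (by simp [hA, hs, sub_ne_zero.2 hu])).congr_deriv ?_
  rw [add_mul, exp_add]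
  field_simp [sub_ne_zero.2 hu]
  ring

theorem hasDerivAt_contourIntegral_wrt_period {ω₁ ω₂ z : ℂ} {r : ℝ} (h1 : 0 < ω₁.re)
    (h2 : 0 < ω₂.re) (hz0 : 0 < z.re) (hz1 : z.re < ω₁.re + ω₂.re) (hr : 0 < r)
    (hr₁ : ‖ω₁‖ * r < 2 * Real.pi) (hr₂ : ‖ω₂‖ * r < 2 * Real.pi) :
    HasDerivAt (fun u => contourIntegral r (fun s =>
        exp (z * s) / ((exp (ω₁ * s) - 1) * (exp (u * s) - 1) * s)))
      (-contourIntegral r (fun s =>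
        exp ((z + ω₂) * s) / ((exp (ω₁ * s) - 1) * (exp (ω₂ * s) - 1) ^ 2))) ω₂ := by
  -- `a` bounds `Re u` from below near `ω₂` while keeping `Re z < Re ω₁ + a`.
  obtain ⟨a, ha, haω⟩ := exists_between (max_lt h2 (sub_lt_iff_lt_add'.2 hz1))
  have ha₀ : 0 < a := (le_max_left _ _).trans_lt ha
  obtain ⟨ε, hε, hsub⟩ :
      ∃ ε > 0, closedBall ω₂ ε ⊆ {u | a < u.re ∧ ‖u‖ * r < 2 * Real.pi} :=
    nhds_basis_closedBall.mem_iff.1 <| ((isOpen_lt continuous_const continuous_re).inter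
      (isOpen_lt (f := fun u : ℂ => ‖u‖ * r) (by fun_prop) continuous_const)).mem_nhds
      ⟨haω, hr₂⟩
  have hc₁ := one_sub_exp_neg_mul_pos h1 hr
  have hc₂ := one_sub_exp_neg_mul_pos ha₀ hr
  have hne₁ : ∀ s ∈ detourContour r, exp (ω₁ * s) ≠ 1 := fun s hs =>
    exp_mul_ne_one_of_mem_detourContour hr h1 hr₁ hs
  have hne : ∀ u ∈ closedBall ω₂ ε, ∀ s ∈ detourContour r, exp (u * s) ≠ 1 :=
    fun u hu s hs => exp_mul_ne_one_of_mem_detourContour hr (ha₀.trans (hsub hu).1) (hsub hu).2 hs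
  rw [← contourIntegral_neg]
  refine hasDerivAt_contourIntegral
    (F := fun u s => exp (z * s) / ((exp (ω₁ * s) - 1) * (exp (u * s) - 1) * s))
    (F' := fun u s => -(exp ((z + u) * s) / ((exp (ω₁ * s) - 1) * (exp (u * s) - 1) ^ 2)))
    (C := ((1 - Real.exp (-(ω₁.re * r))) * (1 - Real.exp (-(a * r))) * r)⁻¹)
    (δ := min z.re (ω₁.re + a - z.re)) hr.le hε
    (lt_min hz0 (by linarith [le_max_right 0 (z.re - ω₁.re)]))
    (fun u _ => by fun_prop) (by fun_prop) ?_ ?_ ?_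
  · intro s hs u hu
    exact hasDerivAt_exp_div_mul_exp_sub_one (sub_ne_zero.2 (hne₁ s hs))
      (ne_zero_of_mem_detourContour hr hs) (hne u (ball_subset_closedBall hu) s hs)
  · intro u hu x hx
    have hu' := hsub (ball_subset_closedBall hu)
    refine norm_exp_mul_div_le (a := ω₁.re + a) (mul_pos hc₁ hc₂) hr hx ?_
      (min_le_left _ _) (by linarith [min_le_right z.re (ω₁.re + a - z.re)])
    calc _ = ((1 - Real.exp (-(ω₁.re * r))) * Real.exp (ω₁.re * max x 0)) *
          ((1 - Real.exp (-(a * r))) * Real.exp (a * max x 0)) := by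
          rw [add_mul, Real.exp_add]; ring
      _ ≤ ‖exp (ω₁ * x) - 1‖ * ‖exp (u * x) - 1‖ :=
          mul_le_mul (one_sub_exp_mul_le_norm_exp_sub_one h1.le le_rfl hx)
            (one_sub_exp_mul_le_norm_exp_sub_one ha₀.le hu'.1.le hx)
            (mul_pos hc₂ (Real.exp_pos _)).le (norm_nonneg _)
      _ = _ := (norm_mul _ _).symm
  · refine ContinuousOn.div (by fun_prop) (by fun_prop) ?_
    rintro ⟨u, s⟩ ⟨hu, hs⟩
    have hs' : s ∈ detourContour r := Or.inl hs
    exact mul_ne_zero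
      (mul_ne_zero (sub_ne_zero.2 (hne₁ s hs')) (sub_ne_zero.2 (hne u hu s hs')))
      (ne_zero_of_mem_detourContour hr hs')

theorem hasDerivAt_contourIntegral_wrt_shift {ω₁ ω₂ z : ℂ} {r : ℝ} (h1 : 0 < ω₁.re)
    (h2 : 0 < ω₂.re) (hz0 : 0 < z.re + ω₂.re) (hz1 : z.re < ω₁.re + ω₂.re) (hr : 0 < r)
    (hr₁ : ‖ω₁‖ * r < 2 * Real.pi) (hr₂ : ‖ω₂‖ * r < 2 * Real.pi) :
    HasDerivAt (fun w => contourIntegral r (fun s =>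
        -(exp ((w + ω₂) * s) / ((exp (ω₂ * s) - 1) ^ 2 * (exp (ω₁ * s) - 1) * s))))
      (-contourIntegral r (fun s =>
        exp ((z + ω₂) * s) / ((exp (ω₁ * s) - 1) * (exp (ω₂ * s) - 1) ^ 2))) z := by
  obtain ⟨δ, hδ, hδ₁, hδ₂⟩ : ∃ δ > 0, 2 * δ ≤ z.re + ω₂.re ∧ 2 * δ ≤ ω₁.re + ω₂.re - z.re :=
    ⟨min (z.re + ω₂.re) (ω₁.re + ω₂.re - z.re) / 2, half_pos (lt_min hz0 (by linarith)),
      by linarith [min_le_left (z.re + ω₂.re) (ω₁.re + ω₂.re - z.re)],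
      by linarith [min_le_right (z.re + ω₂.re) (ω₁.re + ω₂.re - z.re)]⟩
  have hre : ∀ w ∈ ball z δ, |w.re - z.re| < δ := fun w hw => by
    simpa using (abs_re_le_norm (w - z)).trans_lt (mem_ball_iff_norm.1 hw)
  have hc₁ := one_sub_exp_neg_mul_pos h1 hr
  have hc₂ := one_sub_exp_neg_mul_pos h2 hr
  have hne₁ : ∀ s ∈ detourContour r, exp (ω₁ * s) - 1 ≠ 0 := fun s hs =>
    sub_ne_zero.2 (exp_mul_ne_one_of_mem_detourContour hr h1 hr₁ hs)
  have hne₂ : ∀ s ∈ detourContour r, exp (ω₂ * s) - 1 ≠ 0 := fun s hs =>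
    sub_ne_zero.2 (exp_mul_ne_one_of_mem_detourContour hr h2 hr₂ hs)
  rw [← contourIntegral_neg]
  refine hasDerivAt_contourIntegral
    (F := fun w s =>
      -(exp ((w + ω₂) * s) / ((exp (ω₂ * s) - 1) ^ 2 * (exp (ω₁ * s) - 1) * s)))
    (F' := fun w s =>
      -(exp ((w + ω₂) * s) / ((exp (ω₁ * s) - 1) * (exp (ω₂ * s) - 1) ^ 2)))
    (C := ((1 - Real.exp (-(ω₂.re * r))) ^ 2 * (1 - Real.exp (-(ω₁.re * r))) * r)⁻¹)
    hr.le hδ hδ (fun _ _ => by fun_prop) (by fun_prop) ?_ ?_ ?_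
  · intro s hs w _
    refine ((((hasDerivAt_id' w).add_const ω₂).mul_const s).cexp.div_const
      ((exp (ω₂ * s) - 1) ^ 2 * (exp (ω₁ * s) - 1) * s)).neg.congr_deriv ?_
    field_simp [ne_zero_of_mem_detourContour hr hs]
  · intro w hw x hx
    have hw' := abs_lt.1 (hre w hw)
    rw [norm_neg]
    refine norm_exp_mul_div_le (a := 2 * ω₂.re + ω₁.re)
      (mul_pos (pow_pos hc₂ 2) hc₁) hr hx ?_ (by rw [add_re]; linarith)
      (by rw [add_re]; linarith)
    calc _ = ((1 - Real.exp (-(ω₂.re * r))) * Real.exp (ω₂.re * max x 0)) ^ 2 *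
          ((1 - Real.exp (-(ω₁.re * r))) * Real.exp (ω₁.re * max x 0)) := by
          rw [add_mul, Real.exp_add, two_mul, add_mul, Real.exp_add]; ring
      _ ≤ ‖exp (ω₂ * x) - 1‖ ^ 2 * ‖exp (ω₁ * x) - 1‖ :=
          mul_le_mul (pow_le_pow_left₀ (mul_pos hc₂ (Real.exp_pos _)).le
              (one_sub_exp_mul_le_norm_exp_sub_one h2.le le_rfl hx) 2)
            (one_sub_exp_mul_le_norm_exp_sub_one h1.le le_rfl hx)
            (mul_pos hc₁ (Real.exp_pos _)).le (by positivity)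
      _ = _ := by rw [norm_mul, norm_pow]
  · refine (ContinuousOn.div (by fun_prop) (by fun_prop) ?_).neg
    rintro ⟨w, s⟩ ⟨-, hs⟩
    have hs' : s ∈ detourContour r := Or.inl hs
    exact mul_ne_zero (mul_ne_zero (pow_ne_zero 2 (hne₂ s hs')) (hne₁ s hs'))
      (ne_zero_of_mem_detourContour hr hs')

/-- The relation `∂/∂ω₂ log F(z|ω₁,ω₂) = ∂/∂z log G(z|ω₂,ω₁)` at the level of the
integral representations: both sides are differentiable and the derivatives agree,
being given by the displayed contour integral. -/
theorem deriv_logF_eq_deriv_logG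
    (ω₁ ω₂ z : ℂ) (h1 : 0 < ω₁.re) (h2 : 0 < ω₂.re)
    (hz0 : 0 < z.re) (hz1 : z.re < (ω₁ + ω₂).re)
    (r : ℝ) (hr0 : 0 < r) (hr1 : r < 2 * Real.pi / max ‖ω₁‖ ‖ω₂‖) :
    DifferentiableAt ℂ (fun u => contourIntegral r (fun s =>
        Complex.exp (z * s) /
          ((Complex.exp (ω₁ * s) - 1) * (Complex.exp (u * s) - 1) * s))) ω₂ ∧
    DifferentiableAt ℂ (fun w => contourIntegral r (fun s =>
        -(Complex.exp ((w + ω₂) * s) /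
          ((Complex.exp (ω₂ * s) - 1) ^ 2 * (Complex.exp (ω₁ * s) - 1) * s)))) z ∧
    deriv (fun u => contourIntegral r (fun s =>
        Complex.exp (z * s) /
          ((Complex.exp (ω₁ * s) - 1) * (Complex.exp (u * s) - 1) * s))) ω₂ =
      -contourIntegral r (fun s =>
        Complex.exp ((z + ω₂) * s) /
          ((Complex.exp (ω₁ * s) - 1) * (Complex.exp (ω₂ * s) - 1) ^ 2)) ∧
    deriv (fun w => contourIntegral r (fun s =>
        -(Complex.exp ((w + ω₂) * s) /
          ((Complex.exp (ω₂ * s) - 1) ^ 2 * (Complex.exp (ω₁ * s) - 1) * s)))) z =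
      -contourIntegral r (fun s =>
        Complex.exp ((z + ω₂) * s) /
          ((Complex.exp (ω₁ * s) - 1) * (Complex.exp (ω₂ * s) - 1) ^ 2)) := by
  have hmax : 0 < max ‖ω₁‖ ‖ω₂‖ :=
    lt_max_of_lt_left (norm_pos_iff.2 fun h => by simp [h] at h1)
  have hr : max ‖ω₁‖ ‖ω₂‖ * r < 2 * Real.pi := by
    rw [mul_comm]; exact (lt_div_iff₀ hmax).1 hr1
  have hr₁ : ‖ω₁‖ * r < 2 * Real.pi :=
    lt_of_le_of_lt (mul_le_mul_of_nonneg_right (le_max_left _ _) hr0.le) hr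
  have hr₂ : ‖ω₂‖ * r < 2 * Real.pi :=
    lt_of_le_of_lt (mul_le_mul_of_nonneg_right (le_max_right _ _) hr0.le) hr
  rw [add_re] at hz1
  have hF := hasDerivAt_contourIntegral_wrt_period h1 h2 hz0 hz1 hr0 hr₁ hr₂
  have hG := hasDerivAt_contourIntegral_wrt_shift h1 h2 (by linarith) hz1 hr0 hr₁ hr₂
  exact ⟨hF.differentiableAt, hG.differentiableAt, hF.deriv, hG.deriv⟩
end

section
/- With the definitions in the context, the conifold Riemann–Hilbert problem has at most one solution: if (B_n, D_n)_{n∈ℤ} and (B'_n, D'_n)_{n∈ℤ} are two families of holomorphic nowhere-vanishing functions on the regions 𝒱(n) satisfying conditions (i)–(iv), then B_n = B'_n and D_n = D'_n for all n ∈ ℤ. -/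
open Complex MeasureTheory Filter Topology

/-- `x = exp(-2πi v/t)`. -/
noncomputable def xfun (v t : ℂ) : ℂ := Complex.exp (-(2 * (Real.pi : ℂ) * Complex.I * v) / t)

/-- `q = exp(-2πi w/t)`. -/
noncomputable def qfun (w t : ℂ) : ℂ := Complex.exp (-(2 * (Real.pi : ℂ) * Complex.I * w) / t)

/-- The open half-plane `ℋ(n)` of directions within angle `π/2` of the ray
`ℝ_{>0}·2πi(v + n·w)`. -/
def Hplane (v w : ℂ) (n : ℤ) : Set ℂ :=
  {t : ℂ | t ≠ 0 ∧ 0 < (t / (2 * (Real.pi : ℂ) * Complex.I * (v + (n : ℂ) * w))).re}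

/-- The region `𝒱(n) = ℋ(n-1) ∪ ℋ(n)`. -/
def Vreg (v w : ℂ) (n : ℤ) : Set ℂ := Hplane v w (n - 1) ∪ Hplane v w n

/-- The open convex sector `Σ(0)` bounded by the rays `ℓ_{-1}` and `ℓ_0`. -/
def Sigma0 (v w : ℂ) : Set ℂ :=
  {t : ℂ | ∃ a b : ℝ, 0 < a ∧ 0 < b ∧
    t = (a : ℂ) * (2 * (Real.pi : ℂ) * Complex.I * (v - w)) +
        (b : ℂ) * (2 * (Real.pi : ℂ) * Complex.I * v)}

/-- The region `-i·Σ(0)`. -/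
def negISigma0 (v w : ℂ) : Set ℂ := {t : ℂ | ∃ u ∈ Sigma0 v w, t = -Complex.I * u}

/-- A set of the form `{ρ·e^{iθ} : ρ > 0, θ₁ ≤ θ ≤ θ₂}`. -/
def SectorShaped (S : Set ℂ) : Prop :=
  ∃ θ₁ θ₂ : ℝ, θ₁ ≤ θ₂ ∧
    S = {z : ℂ | ∃ ρ θ : ℝ, 0 < ρ ∧ θ₁ ≤ θ ∧ θ ≤ θ₂ ∧
          z = (ρ : ℂ) * Complex.exp (Complex.I * (θ : ℂ))}

/-- A solution of the conifold Riemann–Hilbert problem: families of holomorphic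
nowhere-vanishing functions `B_n, D_n` on the regions `𝒱(n)` satisfying the limit
condition at `0`, polynomial growth at `∞`, the jumping relations across the rays
`ℓ_n`, and the reflection relations on `-i·Σ(0)`. -/
structure ConifoldRHSolution (v w : ℂ) where
  B : ℤ → ℂ → ℂ
  D : ℤ → ℂ → ℂ
  holoB : ∀ n : ℤ, DifferentiableOn ℂ (B n) (Vreg v w n)
  holoD : ∀ n : ℤ, DifferentiableOn ℂ (D n) (Vreg v w n)
  neB : ∀ n : ℤ, ∀ t ∈ Vreg v w n, B n t ≠ 0
  neD : ∀ n : ℤ, ∀ t ∈ Vreg v w n, D n t ≠ 0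
  limB : ∀ n : ℤ, ∀ S : Set ℂ, SectorShaped S → S ⊆ Vreg v w n →
    Filter.Tendsto (B n) (nhdsWithin 0 S) (nhds 1)
  limD : ∀ n : ℤ, ∀ S : Set ℂ, SectorShaped S → S ⊆ Vreg v w n →
    Filter.Tendsto (D n) (nhdsWithin 0 S) (nhds 1)
  growth : ∀ n : ℤ, ∃ k : ℝ, 0 < k ∧ ∀ S : Set ℂ, SectorShaped S → S ⊆ Vreg v w n →
    ∃ M : ℝ, ∀ t ∈ S, M < ‖t‖ →
      ‖t‖ ^ (-k) < ‖B n t‖ ∧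
      ‖B n t‖ < ‖t‖ ^ k ∧
      ‖t‖ ^ (-k) < ‖D n t‖ ∧
      ‖D n t‖ < ‖t‖ ^ k
  jumpB : ∀ n : ℤ, ∀ t ∈ Hplane v w n,
    B (n + 1) t = B n t * (1 - xfun v t * qfun w t ^ n)⁻¹
  jumpD : ∀ n : ℤ, ∀ t ∈ Hplane v w n,
    D (n + 1) t = D n t * (1 - xfun v t * qfun w t ^ n) ^ (-n)
  reflB : ∀ t ∈ negISigma0 v w,
    B 0 t * B 0 (-t) =
      (∏' n : ℕ, (1 - xfun v t * qfun w t ^ n)) *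
      (∏' n : ℕ, (1 - (xfun v t)⁻¹ * qfun w t ^ (n + 1)))⁻¹
  reflD : ∀ t ∈ negISigma0 v w,
    D 0 t * D 0 (-t) =
      (∏' n : ℕ, (1 - xfun v t * qfun w t ^ n) ^ n) *
      (∏' n : ℕ, (1 - (xfun v t)⁻¹ * qfun w t ^ (n + 1)) ^ (n + 1)) *
      (∏' k : ℕ, (1 - qfun w t ^ (k + 1)) ^ (-(2 * ((k : ℤ) + 1))))

/-!
For two solutions, the ratios `B_n / B'_n` solve the same problem with trivial jumps and
trivial reflection data (likewise for `D`). Trivial jumps make the ratios agree on overlaps, so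
they glue to one holomorphic nowhere-vanishing function `F` on `⋃ ℋ(n)`, the plane slit along
the closed ray `ℝ_{≥0}·w`. By the identity theorem `F(t) F(-t) = 1` off the line `ℝ·w`, so
`F(-t)⁻¹` continues `F` across the ray to `ℂ*`. Since `𝒱(0)` contains a closed half-plane `T`
with `T ∪ -T = ℂ*`, the limit at `0` makes `0` a removable singularity with value `1`, and the
growth bounds make the extension of polynomial growth. A nowhere-vanishing entire function of
polynomial growth is a polynomial without roots, hence constant, so `F = 1`.
-/

open Polynomial ComplexConjugate

section IntervalChain

variable {β : Type*} {f : ℤ → β} {S : Set ℤ}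

lemma Int.apply_eq_of_Ico_subset (hf : ∀ n ∈ S, f (n + 1) = f n) {a b : ℤ} (hab : a ≤ b)
    (hS : Set.Ico a b ⊆ S) : f b = f a := by
  induction b, hab using Int.leInduction with
  | base => rfl
  | succ b hab ih =>
    rw [hf b (hS ⟨hab, lt_add_one b⟩), ih fun c hc => hS ⟨hc.1, hc.2.trans (lt_add_one b)⟩]

lemma Int.apply_eq_of_ordConnected (hS : S.OrdConnected) (hf : ∀ n ∈ S, f (n + 1) = f n)
    {a b : ℤ} (ha : a ∈ S) (hb : b - 1 ∈ S ∨ b ∈ S) : f b = f a := by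
  rcases le_total a b with hab | hba
  · refine Int.apply_eq_of_Ico_subset hf hab fun c hc => ?_
    rcases hb with hb | hb
    exacts [hS.out ha hb ⟨hc.1, Int.le_sub_one_of_lt hc.2⟩, hS.out ha hb ⟨hc.1, hc.2.le⟩]
  · refine (Int.apply_eq_of_Ico_subset hf hba fun c hc => ?_).symm
    rcases hb with hb | hb
    exacts [hS.out hb ha ⟨(Int.sub_one_lt_of_le hc.1).le, hc.2.le⟩, hS.out hb ha ⟨hc.1, hc.2.le⟩]

end IntervalChain

section Glue

variable {α : Type*} {H : ℤ → Set α} {φ : ℤ → α → ℂ}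

open Classical in
-- The value `1` off `⋃ n, H n` is an arbitrary convention.
noncomputable def glue (H : ℤ → Set α) (φ : ℤ → α → ℂ) (t : α) : ℂ :=
  if h : ∃ n, t ∈ H n then φ h.choose t else 1

lemma glue_eq (hH : ∀ t, {n | t ∈ H n}.OrdConnected)
    (hjump : ∀ n, ∀ t ∈ H n, φ (n + 1) t = φ n t) {n : ℤ} {t : α} (ht : t ∈ H (n - 1) ∪ H n) :
    glue H φ t = φ n t := by
  have h : ∃ k, t ∈ H k := ht.elim (fun h => ⟨_, h⟩) (fun h => ⟨_, h⟩)
  rw [glue, dif_pos h]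
  exact (Int.apply_eq_of_ordConnected (f := fun k => φ k t) (hH t) (fun k hk => hjump k t hk)
    h.choose_spec ht).symm

end Glue

section PolynomialGrowth

variable {f : ℂ → ℂ} {k M : ℝ}

lemma Differentiable.iteratedDeriv_eq_zero_of_norm_le_rpow (hf : Differentiable ℂ f)
    (hbound : ∀ z, M < ‖z‖ → ‖f z‖ ≤ ‖z‖ ^ k) {n : ℕ} (hn : k < n) :
    iteratedDeriv n f 0 = 0 := by
  have hcauchy : ∀ᶠ R in atTop, ‖iteratedDeriv n f 0‖ ≤ n.factorial * R ^ (k - n) := by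
    filter_upwards [eventually_gt_atTop (max M 0)] with R hR
    have hR0 : 0 < R := (le_max_right M 0).trans_lt hR
    have hsphere : ∀ z ∈ Metric.sphere (0 : ℂ) R, ‖f z‖ ≤ R ^ k := fun z hz => by
      rw [mem_sphere_zero_iff_norm] at hz
      exact hz ▸ hbound z (hz ▸ (le_max_left M 0).trans_lt hR)
    calc ‖iteratedDeriv n f 0‖ ≤ n.factorial * R ^ k / R ^ n :=
          norm_iteratedDeriv_le_of_forall_mem_sphere_norm_le n hR0 hf.diffContOnCl hsphere
      _ = n.factorial * R ^ (k - n) := by rw [Real.rpow_sub hR0, Real.rpow_natCast]; ring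
  have hlim : Tendsto (fun R : ℝ => (n.factorial : ℝ) * R ^ (k - n)) atTop (𝓝 0) := by
    simpa using (tendsto_rpow_neg_atTop (by linarith : 0 < (n : ℝ) - k)).const_mul
      (n.factorial : ℝ)
  exact norm_le_zero_iff.1 (ge_of_tendsto hlim hcauchy)

lemma Differentiable.exists_polynomial_of_norm_le_rpow (hf : Differentiable ℂ f)
    (hbound : ∀ z, M < ‖z‖ → ‖f z‖ ≤ ‖z‖ ^ k) : ∃ P : ℂ[X], ∀ z, f z = P.eval z := by
  let N := ⌊k⌋₊ + 1
  refine ⟨∑ n ∈ Finset.range N, C ((n.factorial : ℂ)⁻¹ * iteratedDeriv n f 0) * X ^ n,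
    fun z => ?_⟩
  have hvanish : ∀ n ∉ Finset.range N,
      (n.factorial : ℂ)⁻¹ • (z - 0) ^ n • iteratedDeriv n f 0 = 0 := fun n hn => by
    rw [hf.iteratedDeriv_eq_zero_of_norm_le_rpow hbound, smul_zero, smul_zero]
    exact (Nat.lt_floor_add_one k).trans_le
      (by exact_mod_cast not_lt.1 (Finset.mem_range.not.1 hn))
  rw [(Complex.hasSum_taylorSeries_of_entire hf 0 z).unique
    (hasSum_sum_of_ne_finset_zero hvanish), eval_finsetSum]
  simp [smul_eq_mul, mul_comm, mul_left_comm]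

lemma Differentiable.apply_eq_apply_of_ne_zero_of_norm_le_rpow (hf : Differentiable ℂ f)
    (hne : ∀ z, f z ≠ 0) (hbound : ∀ z, M < ‖z‖ → ‖f z‖ ≤ ‖z‖ ^ k) (z w : ℂ) : f z = f w := by
  obtain ⟨P, hP⟩ := hf.exists_polynomial_of_norm_le_rpow hbound
  have hdeg : P.degree ≤ 0 := not_lt.1 fun hpos => by
    obtain ⟨z, hz⟩ := Complex.exists_root hpos
    exact hne z ((hP z).trans hz)
  rw [hP, hP, eq_C_of_degree_le_zero hdeg, eval_C, eval_C]

end PolynomialGrowth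

lemma sectorShaped_setOf_im_mul_nonneg {a : ℂ} (ha : a ≠ 0) :
    SectorShaped {t : ℂ | t ≠ 0 ∧ 0 ≤ (t * a).im} := by
  refine ⟨-arg a, -arg a + Real.pi, by linarith [Real.pi_pos], Set.ext fun t => ⟨?_, ?_⟩⟩
  · rintro ⟨ht, him⟩
    have hta : t * a ≠ 0 := mul_ne_zero ht ha
    refine ⟨‖t‖, arg (t * a) - arg a, norm_pos_iff.2 ht, by linarith [arg_nonneg_iff.2 him],
      by linarith [arg_le_pi (t * a)], ?_⟩
    have hexp : ∀ x : ℂ, x ≠ 0 → exp (arg x * I) = x / ‖x‖ := fun x hx => by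
      rw [eq_div_iff (ofReal_ne_zero.2 (norm_ne_zero_iff.2 hx)), mul_comm]
      exact norm_mul_exp_arg_mul_I x
    rw [ofReal_sub, mul_sub, exp_sub, mul_comm I, mul_comm I, hexp _ hta, hexp _ ha, norm_mul,
      ofReal_mul]
    have : (‖t‖ : ℂ) ≠ 0 := ofReal_ne_zero.2 (norm_ne_zero_iff.2 ht)
    have : (‖a‖ : ℂ) ≠ 0 := ofReal_ne_zero.2 (norm_ne_zero_iff.2 ha)
    field_simp
  · rintro ⟨ρ, θ, hρ, h₁, h₂, rfl⟩
    refine ⟨mul_ne_zero (ofReal_ne_zero.2 hρ.ne') (exp_ne_zero _), ?_⟩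
    have : (ρ : ℂ) * exp (I * θ) * a = ↑(ρ * ‖a‖) * exp (↑(θ + arg a) * I) := by
      conv_lhs => rw [← norm_mul_exp_arg_mul_I a]
      push_cast
      rw [add_mul, exp_add]
      ring_nf
    rw [this, im_ofReal_mul, exp_ofReal_mul_I_im]
    exact mul_nonneg (by positivity) (Real.sin_nonneg_of_nonneg_of_le_pi (by linarith)
      (by linarith))

section ReflectionExtension

variable {U T : Set ℂ} {F : ℂ → ℂ} {t : ℂ}

open Classical in
noncomputable def reflectionExtension (U : Set ℂ) (F : ℂ → ℂ) (t : ℂ) : ℂ :=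
  if t ∈ U then F t else if -t ∈ U then (F (-t))⁻¹ else 1

lemma reflectionExtension_of_mem (ht : t ∈ U) : reflectionExtension U F t = F t := if_pos ht

lemma reflectionExtension_of_neg_mem (hrefl : ∀ t ∈ U, -t ∈ U → F t * F (-t) = 1)
    (ht : -t ∈ U) : reflectionExtension U F t = (F (-t))⁻¹ := by
  unfold reflectionExtension
  split_ifs with h
  · exact eq_inv_of_mul_eq_one_left (hrefl t h ht)
  · rfl

lemma reflectionExtension_ne_zero (hne : ∀ t ∈ U, F t ≠ 0) (t : ℂ) :
    reflectionExtension U F t ≠ 0 := by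
  unfold reflectionExtension
  split_ifs with h h'
  exacts [hne t h, inv_ne_zero (hne _ h'), one_ne_zero]

lemma differentiableAt_reflectionExtension (hU : IsOpen U) (hF : DifferentiableOn ℂ F U)
    (hne : ∀ t ∈ U, F t ≠ 0) (hrefl : ∀ t ∈ U, -t ∈ U → F t * F (-t) = 1)
    (ht : t ∈ U ∨ -t ∈ U) : DifferentiableAt ℂ (reflectionExtension U F) t := by
  rcases ht with ht | ht
  · exact (hF.differentiableAt (hU.mem_nhds ht)).congr_of_eventuallyEq
      (eventually_of_mem (hU.mem_nhds ht) fun s hs => reflectionExtension_of_mem hs)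
  · have hd : DifferentiableAt ℂ (fun s => (F (-s))⁻¹) t :=
      ((hF.differentiableAt (hU.mem_nhds ht)).comp t differentiable_neg.differentiableAt).inv
        (hne _ ht)
    exact hd.congr_of_eventuallyEq (eventually_of_mem ((hU.preimage continuous_neg).mem_nhds ht)
      fun s hs => reflectionExtension_of_neg_mem hrefl hs)

lemma tendsto_reflectionExtension_nhdsNE (hrefl : ∀ t ∈ U, -t ∈ U → F t * F (-t) = 1)
    (hTU : T ⊆ U) (hT : ∀ t ≠ 0, t ∈ T ∨ -t ∈ T) (hlim : Tendsto F (𝓝[T] 0) (𝓝 1)) :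
    Tendsto (reflectionExtension U F) (𝓝[≠] 0) (𝓝 1) := by
  have hneg : Tendsto Neg.neg (𝓝[Neg.neg ⁻¹' T] (0 : ℂ)) (𝓝[T] 0) := by
    simpa using (continuous_neg.continuousWithinAt (x := 0)).tendsto_nhdsWithin
      (Set.mapsTo_preimage Neg.neg T)
  refine Tendsto.mono_left ?_ (nhdsWithin_mono 0 (t := T ∪ Neg.neg ⁻¹' T) fun t ht => hT t ht)
  rw [nhdsWithin_union, tendsto_sup]
  constructor
  · exact hlim.congr' (eventually_nhdsWithin_of_forall fun t ht =>
      (reflectionExtension_of_mem (hTU ht)).symm)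
  · have hinv := (hlim.comp hneg).inv₀ one_ne_zero
    rw [inv_one] at hinv
    exact hinv.congr' (eventually_nhdsWithin_of_forall fun t ht =>
      (reflectionExtension_of_neg_mem hrefl (hTU ht)).symm)

lemma norm_reflectionExtension_le {k M : ℝ} (hrefl : ∀ t ∈ U, -t ∈ U → F t * F (-t) = 1)
    (hTU : T ⊆ U) (hT : ∀ t ≠ 0, t ∈ T ∨ -t ∈ T)
    (hgrowth : ∀ t ∈ T, M < ‖t‖ → ‖t‖ ^ (-k) < ‖F t‖ ∧ ‖F t‖ < ‖t‖ ^ k)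
    (ht : max M 0 < ‖t‖) : ‖reflectionExtension U F t‖ ≤ ‖t‖ ^ k := by
  have htM : M < ‖t‖ := (le_max_left _ _).trans_lt ht
  have ht0 : 0 < ‖t‖ := (le_max_right _ _).trans_lt ht
  rcases hT t (norm_pos_iff.1 ht0) with h | h
  · rw [reflectionExtension_of_mem (hTU h)]
    exact (hgrowth t h htM).2.le
  · have hlower := (hgrowth (-t) h (by rwa [norm_neg])).1
    rw [norm_neg] at hlower
    rw [reflectionExtension_of_neg_mem hrefl (hTU h), norm_inv]
    calc ‖F (-t)‖⁻¹ ≤ (‖t‖ ^ (-k))⁻¹ := inv_anti₀ (by positivity) hlower.le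
      _ = ‖t‖ ^ k := by rw [Real.rpow_neg ht0.le, inv_inv]

theorem eqOn_one_of_mul_neg_eq_one {k M : ℝ} (hU : IsOpen U) (h0 : (0 : ℂ) ∉ U)
    (hF : DifferentiableOn ℂ F U) (hne : ∀ t ∈ U, F t ≠ 0)
    (hrefl : ∀ t ∈ U, -t ∈ U → F t * F (-t) = 1)
    (hTU : T ⊆ U) (hT : ∀ t ≠ 0, t ∈ T ∨ -t ∈ T) (hlim : Tendsto F (𝓝[T] 0) (𝓝 1))
    (hgrowth : ∀ t ∈ T, M < ‖t‖ → ‖t‖ ^ (-k) < ‖F t‖ ∧ ‖F t‖ < ‖t‖ ^ k) :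
    Set.EqOn F 1 U := by
  set G := reflectionExtension U F
  have hcover : ∀ t ≠ 0, t ∈ U ∨ -t ∈ U := fun t ht => (hT t ht).imp (@hTU t) (@hTU (-t))
  have hG0 : G 0 = 1 := by simp [G, reflectionExtension, h0]
  have hdiff : Differentiable ℂ G := fun t => by
    rcases eq_or_ne t 0 with rfl | ht
    · refine (analyticAt_of_differentiable_on_punctured_nhds_of_continuousAt ?_ ?_).differentiableAt
      · filter_upwards [self_mem_nhdsWithin] with s hs
        exact differentiableAt_reflectionExtension hU hF hne hrefl (hcover s hs)
      · rw [← continuousWithinAt_compl_self, ContinuousWithinAt, hG0]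
        exact tendsto_reflectionExtension_nhdsNE hrefl hTU hT hlim
    · exact differentiableAt_reflectionExtension hU hF hne hrefl (hcover t ht)
  intro t ht
  rw [Pi.one_apply, ← reflectionExtension_of_mem (F := F) ht, ← hG0]
  exact hdiff.apply_eq_apply_of_ne_zero_of_norm_le_rpow (reflectionExtension_ne_zero hne)
    (fun z hz => norm_reflectionExtension_le hrefl hTU hT hgrowth hz) t 0

end ReflectionExtension

section Geometry

variable {v w t : ℂ} {n : ℤ}

lemma ne_zero_of_im_div_pos (hτ : 0 < (v / w).im) : w ≠ 0 := by
  rintro rfl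
  simp at hτ

lemma mem_Hplane_iff (hτ : 0 < (v / w).im) :
    t ∈ Hplane v w n ↔ 0 < (t / w).im * ((v / w).re + n) - (t / w).re * (v / w).im := by
  have hw := ne_zero_of_im_div_pos hτ
  set c := v / w + n
  have hc : c ≠ 0 := fun h => by
    have := congrArg im h
    simp only [c, add_im, intCast_im, add_zero, zero_im] at this
    exact hτ.ne' this
  have hr : (0 : ℝ) < 2 * Real.pi * normSq c := by have := normSq_pos.2 hc; positivity
  have key : t / (2 * Real.pi * I * (v + n * w)) =
      t / w * conj c * -I * ((2 * Real.pi * normSq c : ℝ) : ℂ)⁻¹ := by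
    have hconj : conj c ≠ 0 := (_root_.map_ne_zero _).2 hc
    have hvw : v + n * w = c * w := by simp only [c]; field_simp
    rw [hvw, ofReal_mul, ofReal_mul, ← mul_conj]
    push_cast
    field_simp
    ring_nf
    rw [I_sq]
    ring
  rw [Hplane, Set.mem_ofPred_eq, and_iff_right_of_imp fun h => by rintro rfl; simp at h, key,
    ← ofReal_inv, re_mul_ofReal, mul_pos_iff_of_pos_right (inv_pos.2 hr)]
  simp only [c, map_add, map_intCast, mul_add, add_im, mul_re, mul_im, neg_re, neg_im, I_re, I_im,
    intCast_re, intCast_im, conj_re, conj_im]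
  ring_nf

lemma ordConnected_Hplane (hτ : 0 < (v / w).im) (t : ℂ) :
    {n : ℤ | t ∈ Hplane v w n}.OrdConnected := by
  refine ⟨fun a ha b hb c hc => ?_⟩
  simp only [Set.mem_ofPred_eq, mem_Hplane_iff hτ] at ha hb ⊢
  have hac : (a : ℝ) ≤ c := by exact_mod_cast hc.1
  have hcb : (c : ℝ) ≤ b := by exact_mod_cast hc.2
  rcases le_total 0 (t / w).im with h | h
  · nlinarith [mul_le_mul_of_nonneg_left hac h]
  · nlinarith [mul_le_mul_of_nonpos_left hcb h]

lemma exists_mem_Hplane_of_im_ne_zero (hτ : 0 < (v / w).im) (ht : (t / w).im ≠ 0) :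
    ∃ n, t ∈ Hplane v w n := by
  set A := (t / w).im * (v / w).re - (t / w).re * (v / w).im
  have hA : ∀ n : ℤ, t ∈ Hplane v w n ↔ 0 < A + n * (t / w).im := fun n => by
    rw [mem_Hplane_iff hτ]
    constructor <;> intro h <;> linarith
  rcases ht.lt_or_gt with hneg | hpos
  · obtain ⟨n, hn⟩ := exists_int_lt (-A / (t / w).im)
    exact ⟨n, (hA n).2 (by nlinarith [(lt_div_iff_of_neg hneg).1 hn])⟩
  · obtain ⟨n, hn⟩ := exists_int_gt (-A / (t / w).im)
    exact ⟨n, (hA n).2 (by nlinarith [(div_lt_iff₀ hpos).1 hn])⟩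

lemma im_ne_zero_of_mem_Hplane_of_neg_mem_Hplane (hτ : 0 < (v / w).im) {m : ℤ}
    (ht : t ∈ Hplane v w n) (ht' : -t ∈ Hplane v w m) : (t / w).im ≠ 0 := by
  intro h
  rw [mem_Hplane_iff hτ] at ht ht'
  simp only [neg_div, neg_im, neg_re, h] at ht ht'
  nlinarith

lemma mem_negISigma0_iff (hτ : 0 < (v / w).im) :
    t ∈ negISigma0 v w ↔ t ∈ Hplane v w 0 ∧ -t ∈ Hplane v w (-1) := by
  have hw := ne_zero_of_im_div_pos hτ
  obtain ⟨τ, rfl⟩ : ∃ τ, v = τ * w := ⟨v / w, (div_mul_cancel₀ v hw).symm⟩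
  obtain ⟨z, rfl⟩ : ∃ z, t = z * w := ⟨t / w, (div_mul_cancel₀ t hw).symm⟩
  simp only [mem_Hplane_iff hτ, neg_div, mul_div_cancel_right₀ _ hw] at hτ ⊢
  have hcone : ∀ a b : ℝ, z * w = -I * (a * (2 * Real.pi * I * (τ * w - w)) +
      b * (2 * Real.pi * I * (τ * w))) ↔ z = 2 * Real.pi * (a * (τ - 1) + b * τ) := fun a b => by
    rw [show -I * (a * (2 * Real.pi * I * (τ * w - w)) + b * (2 * Real.pi * I * (τ * w))) =
        2 * Real.pi * (a * (τ - 1) + b * τ) * w by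
          linear_combination -(2 * Real.pi * (a * (τ - 1) + b * τ) * w) * I_sq,
      mul_left_inj' hw]
  have hpi := Real.pi_pos
  constructor
  · rintro ⟨_, ⟨a, b, ha, hb, rfl⟩, h⟩
    obtain rfl := (hcone a b).1 h
    simp only [mul_re, mul_im, add_re, add_im, sub_re, sub_im, ofReal_re, ofReal_im, re_ofNat,
      im_ofNat, one_re, one_im, neg_re, neg_im, Int.cast_zero, Int.cast_neg, Int.cast_one]
    constructor <;> nlinarith [mul_pos ha hτ, mul_pos hb hτ]
  · rintro ⟨hA, hB⟩
    simp only [Int.cast_zero, add_zero, Int.cast_neg, Int.cast_one, neg_im, neg_re] at hA hB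
    refine ⟨_, ⟨(z.im * τ.re - z.re * τ.im) / (2 * Real.pi * τ.im),
      (z.re * τ.im - z.im * τ.re + z.im) / (2 * Real.pi * τ.im), by positivity,
      div_pos (by linarith) (by positivity), rfl⟩, (hcone _ _).2 ?_⟩
    apply Complex.ext <;>
      simp only [mul_re, mul_im, add_re, add_im, sub_re, sub_im, ofReal_re, ofReal_im, re_ofNat,
        im_ofNat, one_re, one_im] <;>
      field_simp <;> ring

-- With `τ = v / w`, `(t * (conj (2τ - 1) / w)).im` is the sum of the linear forms cutting out
-- `ℋ(-1)` and `ℋ(0)` in `mem_Hplane_iff`.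
lemma setOf_im_mul_nonneg_subset_Vreg_zero (hτ : 0 < (v / w).im) :
    {t : ℂ | t ≠ 0 ∧ 0 ≤ (t * (conj (2 * (v / w) - 1) / w)).im} ⊆ Vreg v w 0 := by
  rintro t ⟨ht, hnonneg⟩
  by_contra hV
  simp only [Vreg, Set.mem_union, not_or, mem_Hplane_iff hτ, not_lt, zero_sub, Int.cast_neg,
    Int.cast_one, Int.cast_zero, add_zero] at hV
  rw [← mul_div_assoc, mul_div_right_comm] at hnonneg
  simp only [mul_im, map_sub, map_mul, sub_re, sub_im, mul_re, conj_re, conj_im, re_ofNat,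
    im_ofNat, one_re, one_im] at hnonneg
  have him : (t / w).im = 0 := by nlinarith
  rw [him] at hV hnonneg
  have hre : (t / w).re * (v / w).im = 0 := by nlinarith
  have hzero : t / w = 0 := Complex.ext ((mul_eq_zero.1 hre).resolve_right hτ.ne') him
  exact ht ((div_eq_zero_iff.1 hzero).resolve_right (ne_zero_of_im_div_pos hτ))

lemma isOpen_Hplane : IsOpen (Hplane v w n) :=
  isOpen_ne.inter (isOpen_lt continuous_const (continuous_re.comp (continuous_id.div_const _)))

lemma Hplane_subset_Vreg : Hplane v w n ⊆ Vreg v w n := Set.subset_union_right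

lemma Hplane_subset_Vreg_add_one : Hplane v w n ⊆ Vreg v w (n + 1) := fun t ht =>
  Or.inl (by rwa [add_sub_cancel_right])

lemma mem_Vreg_zero_of_mem_negISigma0 (hτ : 0 < (v / w).im) (ht : t ∈ negISigma0 v w) :
    t ∈ Vreg v w 0 ∧ -t ∈ Vreg v w 0 := by
  have h := (mem_negISigma0_iff hτ).1 ht
  exact ⟨Hplane_subset_Vreg h.1, by simpa using Hplane_subset_Vreg_add_one h.2⟩

lemma isOpen_negISigma0 (hτ : 0 < (v / w).im) : IsOpen (negISigma0 v w) := by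
  rw [show negISigma0 v w = Hplane v w 0 ∩ Neg.neg ⁻¹' Hplane v w (-1) from
    Set.ext fun t => mem_negISigma0_iff hτ]
  exact isOpen_Hplane.inter (isOpen_Hplane.preimage continuous_neg)

lemma negISigma0_nonempty : (negISigma0 v w).Nonempty :=
  ⟨_, _, ⟨1, 1, one_pos, one_pos, rfl⟩, rfl⟩

lemma im_div_pos_of_mem_negISigma0 (hτ : 0 < (v / w).im) (ht : t ∈ negISigma0 v w) :
    0 < (t / w).im := by
  have h := (mem_negISigma0_iff hτ).1 ht
  simp only [mem_Hplane_iff hτ, neg_div, neg_im, neg_re, Int.cast_zero, Int.cast_neg,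
    Int.cast_one] at h
  linarith [h.1, h.2]

lemma exists_sectorShaped_subset_Vreg_zero (hτ : 0 < (v / w).im) :
    ∃ T, SectorShaped T ∧ T ⊆ Vreg v w 0 ∧ ∀ t ≠ 0, t ∈ T ∨ -t ∈ T := by
  have ha : conj (2 * (v / w) - 1) / w ≠ 0 := by
    refine div_ne_zero ((_root_.map_ne_zero _).2 fun h => ?_) (ne_zero_of_im_div_pos hτ)
    have := congrArg im h
    simp only [sub_im, mul_im, re_ofNat, im_ofNat, one_im, zero_im] at this
    linarith
  refine ⟨_, sectorShaped_setOf_im_mul_nonneg ha, setOf_im_mul_nonneg_subset_Vreg_zero hτ,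
    fun t ht => ?_⟩
  rcases le_total 0 (t * (conj (2 * (v / w) - 1) / w)).im with h | h
  · exact Or.inl ⟨ht, h⟩
  · exact Or.inr ⟨neg_ne_zero.2 ht, by rw [neg_mul, neg_im]; exact neg_nonneg.2 h⟩

end Geometry

section Reflection

variable {v w t : ℂ} {F : ℂ → ℂ}

lemma mul_neg_eq_one_of_im_ne_zero (hτ : 0 < (v / w).im)
    (hF : ∀ t, (t / w).im ≠ 0 → DifferentiableAt ℂ F t)
    (hrefl : ∀ t ∈ negISigma0 v w, F t * F (-t) = 1) (ht : (t / w).im ≠ 0) :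
    F t * F (-t) = 1 := by
  let P := {t : ℂ | 0 < (t / w).im}
  have hP : IsOpen P :=
    isOpen_lt continuous_const (continuous_im.comp (continuous_id.div_const _))
  have hPconv : Convex ℝ P :=
    convex_halfSpace_gt ⟨fun a b => by simp [add_div], fun r a => by simp [mul_div_assoc]⟩ 0
  have hanalytic : AnalyticOnNhd ℂ (fun t => F t * F (-t)) P := by
    refine DifferentiableOn.analyticOnNhd (fun t ht => ?_) hP
    have hneg : ((-t) / w).im ≠ 0 := by simpa [neg_div] using ht.ne'
    exact ((hF t ht.ne').mul ((hF _ hneg).comp t differentiable_neg.differentiableAt))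
      |>.differentiableWithinAt
  obtain ⟨t₀, ht₀⟩ := negISigma0_nonempty (v := v) (w := w)
  have hone : Set.EqOn (fun t => F t * F (-t)) 1 P :=
    hanalytic.eqOn_of_preconnected_of_eventuallyEq analyticOnNhd_const hPconv.isPreconnected
      (im_div_pos_of_mem_negISigma0 hτ ht₀)
      (eventually_of_mem ((isOpen_negISigma0 hτ).mem_nhds ht₀) hrefl)
  rcases ht.lt_or_gt with hneg | hpos
  · have := hone (show -t ∈ P by simpa [P, neg_div] using hneg)
    simpa [mul_comm] using this
  · exact hone hpos

end Reflection

lemma rpow_neg_lt_div_and_div_lt_rpow {x a b k k' : ℝ} (hx : 0 < x)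
    (ha : x ^ (-k) < a ∧ a < x ^ k) (hb : x ^ (-k') < b ∧ b < x ^ k') :
    x ^ (-(k + k')) < a / b ∧ a / b < x ^ (k + k') := by
  have hb0 : 0 < b := (Real.rpow_pos_of_pos hx _).trans hb.1
  constructor
  · calc x ^ (-(k + k')) = x ^ (-k) / x ^ k' := by rw [← Real.rpow_sub hx]; ring_nf
      _ < a / b := div_lt_div₀ ha.1 hb.2.le (ha.1.trans' (Real.rpow_pos_of_pos hx _)).le hb0
  · calc a / b < x ^ k / x ^ (-k') :=
          div_lt_div₀ ha.2 hb.1.le (Real.rpow_nonneg hx.le _) (Real.rpow_pos_of_pos hx _)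
      _ = x ^ (k + k') := by rw [← Real.rpow_sub hx, sub_neg_eq_add]

structure IsScalarRHSolution (v w : ℂ) (f c : ℤ → ℂ → ℂ) (r : ℂ → ℂ) : Prop where
  differentiableOn : ∀ n, DifferentiableOn ℂ (f n) (Vreg v w n)
  ne_zero : ∀ n, ∀ t ∈ Vreg v w n, f n t ≠ 0
  tendsto : ∀ n S, SectorShaped S → S ⊆ Vreg v w n → Tendsto (f n) (𝓝[S] 0) (𝓝 1)
  growth : ∀ n, ∃ k : ℝ, 0 < k ∧ ∀ S, SectorShaped S → S ⊆ Vreg v w n →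
    ∃ M : ℝ, ∀ t ∈ S, M < ‖t‖ → ‖t‖ ^ (-k) < ‖f n t‖ ∧ ‖f n t‖ < ‖t‖ ^ k
  jump : ∀ n, ∀ t ∈ Hplane v w n, f (n + 1) t = f n t * c n t
  reflection : ∀ t ∈ negISigma0 v w, f 0 t * f 0 (-t) = r t

namespace ConifoldRHSolution

variable {v w : ℂ} (sol : ConifoldRHSolution v w)

lemma isScalarRHSolution_B :
    IsScalarRHSolution v w sol.B (fun n t => (1 - xfun v t * qfun w t ^ n)⁻¹)
      (fun t => (∏' n : ℕ, (1 - xfun v t * qfun w t ^ n)) *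
        (∏' n : ℕ, (1 - (xfun v t)⁻¹ * qfun w t ^ (n + 1)))⁻¹) where
  differentiableOn := sol.holoB
  ne_zero := sol.neB
  tendsto := sol.limB
  growth n := by
    obtain ⟨k, hk, h⟩ := sol.growth n
    refine ⟨k, hk, fun S hS hSV => ?_⟩
    obtain ⟨M, hM⟩ := h S hS hSV
    exact ⟨M, fun t ht htM => ⟨(hM t ht htM).1, (hM t ht htM).2.1⟩⟩
  jump := sol.jumpB
  reflection := sol.reflB

lemma isScalarRHSolution_D :
    IsScalarRHSolution v w sol.D (fun n t => (1 - xfun v t * qfun w t ^ n) ^ (-n))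
      (fun t => (∏' n : ℕ, (1 - xfun v t * qfun w t ^ n) ^ n) *
        (∏' n : ℕ, (1 - (xfun v t)⁻¹ * qfun w t ^ (n + 1)) ^ (n + 1)) *
        (∏' k : ℕ, (1 - qfun w t ^ (k + 1)) ^ (-(2 * ((k : ℤ) + 1))))) where
  differentiableOn := sol.holoD
  ne_zero := sol.neD
  tendsto := sol.limD
  growth n := by
    obtain ⟨k, hk, h⟩ := sol.growth n
    refine ⟨k, hk, fun S hS hSV => ?_⟩
    obtain ⟨M, hM⟩ := h S hS hSV
    exact ⟨M, fun t ht htM => (hM t ht htM).2.2⟩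
  jump := sol.jumpD
  reflection := sol.reflD

end ConifoldRHSolution

namespace IsScalarRHSolution

variable {v w : ℂ} {f g c : ℤ → ℂ → ℂ} {r : ℂ → ℂ}

lemma div (hτ : 0 < (v / w).im) (hf : IsScalarRHSolution v w f c r)
    (hg : IsScalarRHSolution v w g c r) :
    IsScalarRHSolution v w (fun n t => f n t / g n t) (fun _ _ => 1) (fun _ => 1) where
  differentiableOn n := (hf.differentiableOn n).div (hg.differentiableOn n) (hg.ne_zero n)
  ne_zero n t ht := div_ne_zero (hf.ne_zero n t ht) (hg.ne_zero n t ht)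
  tendsto n S hS hSV := by
    have h := (hf.tendsto n S hS hSV).div (hg.tendsto n S hS hSV) one_ne_zero
    rwa [div_one] at h
  growth n := by
    obtain ⟨k, hk, hfk⟩ := hf.growth n
    obtain ⟨k', hk', hgk⟩ := hg.growth n
    refine ⟨k + k', add_pos hk hk', fun S hS hSV => ?_⟩
    obtain ⟨M, hM⟩ := hfk S hS hSV
    obtain ⟨M', hM'⟩ := hgk S hS hSV
    refine ⟨max (max M M') 0, fun t ht htM => ?_⟩
    rw [norm_div]
    exact rpow_neg_lt_div_and_div_lt_rpow ((le_max_right _ _).trans_lt htM)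
      (hM t ht (by order)) (hM' t ht (by order))
  jump n t ht := by
    have hc : c n t ≠ 0 :=
      right_ne_zero_of_mul <| hg.jump n t ht ▸ hg.ne_zero (n + 1) t (Hplane_subset_Vreg_add_one ht)
    simp only [hf.jump n t ht, hg.jump n t ht, mul_div_mul_right _ _ hc, mul_one]
  reflection t ht := by
    obtain ⟨h, h'⟩ := mem_Vreg_zero_of_mem_negISigma0 hτ ht
    rw [div_mul_div_comm, hf.reflection t ht, ← hg.reflection t ht,
      div_self (mul_ne_zero (hg.ne_zero 0 t h) (hg.ne_zero 0 (-t) h'))]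

section TrivialData

variable {φ : ℤ → ℂ → ℂ} {t : ℂ} {n : ℤ} (hτ : 0 < (v / w).im)
  (hφ : IsScalarRHSolution v w φ (fun _ _ => 1) (fun _ => 1))
include hτ hφ

lemma glue_eq_of_mem_Vreg (ht : t ∈ Vreg v w n) : glue (Hplane v w) φ t = φ n t :=
  glue_eq (ordConnected_Hplane hτ) (fun n t ht => (hφ.jump n t ht).trans (mul_one _)) ht

lemma differentiableAt_glue (ht : t ∈ Hplane v w n) :
    DifferentiableAt ℂ (glue (Hplane v w) φ) t :=
  ((hφ.differentiableOn n).differentiableAt (Filter.mem_of_superset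
    (isOpen_Hplane.mem_nhds ht) Hplane_subset_Vreg)).congr_of_eventuallyEq
    (eventually_of_mem (isOpen_Hplane.mem_nhds ht) fun _ hs =>
      hφ.glue_eq_of_mem_Vreg hτ (Hplane_subset_Vreg hs))

lemma glue_mul_glue_neg {m : ℤ} (ht : t ∈ Hplane v w n) (ht' : -t ∈ Hplane v w m) :
    glue (Hplane v w) φ t * glue (Hplane v w) φ (-t) = 1 := by
  refine mul_neg_eq_one_of_im_ne_zero hτ (fun s hs => ?_) (fun s hs => ?_)
    (im_ne_zero_of_mem_Hplane_of_neg_mem_Hplane hτ ht ht')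
  · obtain ⟨k, hk⟩ := exists_mem_Hplane_of_im_ne_zero hτ hs
    exact hφ.differentiableAt_glue hτ hk
  · obtain ⟨h, h'⟩ := mem_Vreg_zero_of_mem_negISigma0 hτ hs
    rw [hφ.glue_eq_of_mem_Vreg hτ h, hφ.glue_eq_of_mem_Vreg hτ h']
    exact hφ.reflection s hs

theorem eq_one (ht : t ∈ Vreg v w n) : φ n t = 1 := by
  let F := glue (Hplane v w) φ
  let U := ⋃ n, Hplane v w n
  have hVU : ∀ n, Vreg v w n ⊆ U := fun n t ht =>
    ht.elim (Set.mem_iUnion_of_mem _) (Set.mem_iUnion_of_mem _)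
  have hdiff : DifferentiableOn ℂ F U := fun s hs => by
    obtain ⟨m, hm⟩ := Set.mem_iUnion.1 hs
    exact (hφ.differentiableAt_glue hτ hm).differentiableWithinAt
  have hne : ∀ s ∈ U, F s ≠ 0 := fun s hs => by
    obtain ⟨m, hm⟩ := Set.mem_iUnion.1 hs
    exact (hφ.glue_eq_of_mem_Vreg hτ (Hplane_subset_Vreg hm)).trans_ne
      (hφ.ne_zero m s (Hplane_subset_Vreg hm))
  have hrefl : ∀ s ∈ U, -s ∈ U → F s * F (-s) = 1 := fun s hs hs' => by
    obtain ⟨m, hm⟩ := Set.mem_iUnion.1 hs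
    obtain ⟨m', hm'⟩ := Set.mem_iUnion.1 hs'
    exact hφ.glue_mul_glue_neg hτ hm hm'
  obtain ⟨T, hT, hTV, hcover⟩ := exists_sectorShaped_subset_Vreg_zero hτ
  have hFT : ∀ s ∈ T, F s = φ 0 s := fun s hs => hφ.glue_eq_of_mem_Vreg hτ (hTV hs)
  have hlim : Tendsto F (𝓝[T] 0) (𝓝 1) :=
    (hφ.tendsto 0 T hT hTV).congr' (eventually_nhdsWithin_of_forall fun s hs => (hFT s hs).symm)
  obtain ⟨k, -, hk⟩ := hφ.growth 0
  obtain ⟨M, hM⟩ := hk T hT hTV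
  have hgrowth : ∀ s ∈ T, M < ‖s‖ → ‖s‖ ^ (-k) < ‖F s‖ ∧ ‖F s‖ < ‖s‖ ^ k := fun s hs => by
    rw [hFT s hs]
    exact hM s hs
  rw [← hφ.glue_eq_of_mem_Vreg hτ ht]
  exact eqOn_one_of_mul_neg_eq_one (isOpen_iUnion fun _ => isOpen_Hplane) (by simp [Hplane])
    hdiff hne hrefl (hTV.trans (hVU 0)) hcover hlim hgrowth (hVU n ht)

end TrivialData

end IsScalarRHSolution

theorem conifoldRH_uniqueness_general
    (v w : ℂ) (him : 0 < (v / w).im)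
    (sol sol' : ConifoldRHSolution v w) :
    ∀ n : ℤ, ∀ t ∈ Vreg v w n, sol.B n t = sol'.B n t ∧ sol.D n t = sol'.D n t := by
  intro n t ht
  have hB := (sol.isScalarRHSolution_B.div him sol'.isScalarRHSolution_B).eq_one him ht
  have hD := (sol.isScalarRHSolution_D.div him sol'.isScalarRHSolution_D).eq_one him ht
  exact ⟨(div_eq_one_iff_eq (sol'.neB n t ht)).1 hB, (div_eq_one_iff_eq (sol'.neD n t ht)).1 hD⟩

/-- The conifold Riemann–Hilbert problem has at most one solution. -/
theorem conifoldRH_uniqueness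
    (v w : ℂ) (hw : w ≠ 0) (hvw : ∀ n : ℤ, v + (n : ℂ) * w ≠ 0)
    (him : 0 < (v / w).im)
    (sol sol' : ConifoldRHSolution v w) :
    ∀ n : ℤ, ∀ t ∈ Vreg v w n, sol.B n t = sol'.B n t ∧ sol.D n t = sol'.D n t :=
  conifoldRH_uniqueness_general v w him sol sol'
end
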